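/- arXiv:2107.10753 — 8 statements merged into one kernel-verified Lean document; each statement's English description precedes it below -/
import Mathlib

section
/- Let L : ℝⁿ × ℝⁿ → ℝ be a symmetric bilinear form of operator norm one, and let x, y ∈ ℝⁿ be linearly independent unit vectors such that L(x,y) = 1. Then the vectors f₁ = (x+y)/‖x+y‖ and f₂ = (x−y)/‖x−y‖ are orthonormal, L(f₁,f₁) = 1, and L(f₂,f₂) = −1. -/
/-!
Put `u = x + y` and `v = x - y`. The norm bound gives `L u u ≤ ‖u‖²` and `-‖v‖² ≤ L v v`, while
polarization gives `L u u - L v v = 4 L x y = 4` and the parallelogram law gives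
`‖u‖² + ‖v‖² = 4`; so both bounds are equalities. Normalizing `u` and `v` gives `f₁` and `f₂`,
which are orthogonal because `‖x‖ = ‖y‖`.
-/

namespace LinearMap

variable {E : Type*} [NormedAddCommGroup E] [InnerProductSpace ℝ E]
  (L : E →ₗ[ℝ] E →ₗ[ℝ] ℝ)

theorem apply_add_self_sub_apply_sub_self (hsym : ∀ u v, L u v = L v u) (u v : E) :
    L (u + v) (u + v) - L (u - v) (u - v) = 4 * L u v := by
  simp only [map_add, map_sub, add_apply, sub_apply, hsym v u]
  ring

theorem apply_inv_norm_smul_self (u : E) :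
    L (‖u‖⁻¹ • u) (‖u‖⁻¹ • u) = L u u / ‖u‖ ^ 2 := by
  simp only [map_smul, smul_apply, smul_eq_mul]
  field_simp

section NormOneBound

variable {L} (hbound : ∀ u v, |L u v| ≤ ‖u‖ * ‖v‖)
include hbound

theorem apply_self_le_norm_sq (u : E) : L u u ≤ ‖u‖ ^ 2 :=
  (le_abs_self _).trans ((hbound u u).trans_eq (sq _).symm)

theorem neg_norm_sq_le_apply_self (u : E) : -‖u‖ ^ 2 ≤ L u u :=
  neg_le.mp ((neg_le_abs _).trans ((hbound u u).trans_eq (sq _).symm))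

theorem apply_add_self_eq_and_apply_sub_self_eq (hsym : ∀ u v, L u v = L v u) {x y : E}
    (hx : ‖x‖ = 1) (hy : ‖y‖ = 1) (hLxy : L x y = 1) :
    L (x + y) (x + y) = ‖x + y‖ ^ 2 ∧ L (x - y) (x - y) = -‖x - y‖ ^ 2 := by
  have hpolar := L.apply_add_self_sub_apply_sub_self hsym x y
  have hpar := parallelogram_law_with_norm ℝ x y
  have hle := apply_self_le_norm_sq hbound (x + y)
  have hge := neg_norm_sq_le_apply_self hbound (x - y)
  rw [hLxy] at hpolar
  rw [hx, hy] at hpar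
  constructor <;> linarith

end NormOneBound

end LinearMap

open LinearMap in
/-- If `L` is a symmetric bilinear form on `ℝⁿ` of operator norm one and
`x, y` are linearly independent unit vectors with `L x y = 1`, then
`f₁ = (x+y)/‖x+y‖` and `f₂ = (x−y)/‖x−y‖` are orthonormal, `L f₁ f₁ = 1` and `L f₂ f₂ = −1`. -/
theorem symmetric_bilinear_norm_one_diagonalization
    {n : ℕ} (L : EuclideanSpace ℝ (Fin n) →ₗ[ℝ] EuclideanSpace ℝ (Fin n) →ₗ[ℝ] ℝ)
    (hsym : ∀ u v, L u v = L v u)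
    (hbound : ∀ u v, |L u v| ≤ ‖u‖ * ‖v‖)
    (x y : EuclideanSpace ℝ (Fin n))
    (hx : ‖x‖ = 1) (hy : ‖y‖ = 1)
    (hind : LinearIndependent ℝ ![x, y])
    (hLxy : L x y = 1) :
    ‖(‖x + y‖⁻¹ • (x + y) : EuclideanSpace ℝ (Fin n))‖ = 1 ∧
    ‖(‖x - y‖⁻¹ • (x - y) : EuclideanSpace ℝ (Fin n))‖ = 1 ∧
    (inner ℝ (‖x + y‖⁻¹ • (x + y) : EuclideanSpace ℝ (Fin n))
      (‖x - y‖⁻¹ • (x - y) : EuclideanSpace ℝ (Fin n)) : ℝ) = 0 ∧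
    L (‖x + y‖⁻¹ • (x + y)) (‖x + y‖⁻¹ • (x + y)) = 1 ∧
    L (‖x - y‖⁻¹ • (x - y)) (‖x - y‖⁻¹ • (x - y)) = -1 := by
  have hadd : x + y ≠ 0 := fun h => one_ne_zero (LinearIndependent.pair_iff.mp hind 1 1
    (by simpa using h)).1
  have hsub : x - y ≠ 0 := fun h => one_ne_zero (LinearIndependent.pair_iff.mp hind 1 (-1)
    (by simpa [← sub_eq_add_neg] using h)).1
  obtain ⟨hLadd, hLsub⟩ := apply_add_self_eq_and_apply_sub_self_eq hbound hsym hx hy hLxy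
  refine ⟨norm_smul_inv_norm hadd, norm_smul_inv_norm hsub, ?_, ?_, ?_⟩
  · rw [real_inner_smul_left, real_inner_smul_right,
      (real_inner_add_sub_eq_zero_iff x y).mpr (hx.trans hy.symm), mul_zero, mul_zero]
  · rw [apply_inv_norm_smul_self, hLadd, div_self (by positivity)]
  · rw [apply_inv_norm_smul_self, hLsub, neg_div, div_self (by positivity)]
end

section
/- Let L : ℝⁿ × ℝⁿ → ℝ be a symmetric bilinear form of operator norm one, and let x, y ∈ ℝⁿ be linearly independent unit vectors with L(x,y) = 1. Let α ∈ ℝ, let x̃ be the vector obtained by rotating x by angle α within the plane span{x,y}, and let ỹ be obtained by rotating y by angle α in the opposite direction within the same plane. Then L(x̃,ỹ) = 1. -/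
/-!
Write `θ = m + d`, `ψ = m - d` and let `u`, `w` be the points of the unit circle of the plane
at angles `m` and `m + π/2`. Then `x = cos d • u + sin d • w` and `y = cos d • u - sin d • w`,
and by symmetry of `L` the cross terms cancel: `L x y = cos² d · L u u - sin² d · L w w`.
Since `|L u u|, |L w w| ≤ 1` and linear independence makes both weights positive, `L x y = 1`
forces `L u u = 1` and `L w w = -1`. The rotated pair is the same expression with `d + α`
in place of `d`, so it also equals `cos² (d + α) + sin² (d + α) = 1`.
-/

open Real

section CirclePoint

variable {E : Type*} [NormedAddCommGroup E] [InnerProductSpace ℝ E]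

/-- The point at angle `t` on the unit circle of the plane with orthonormal basis `e₁, e₂`. -/
noncomputable def circlePoint (e₁ e₂ : E) (t : ℝ) : E := cos t • e₁ + sin t • e₂

theorem circlePoint_add (e₁ e₂ : E) (s t : ℝ) :
    circlePoint e₁ e₂ (s + t) =
      cos t • circlePoint e₁ e₂ s + sin t • circlePoint e₁ e₂ (s + π / 2) := by
  simp only [circlePoint, cos_add, sin_add, cos_pi_div_two, sin_pi_div_two]
  module

theorem circlePoint_sub (e₁ e₂ : E) (s t : ℝ) :
    circlePoint e₁ e₂ (s - t) =
      cos t • circlePoint e₁ e₂ s - sin t • circlePoint e₁ e₂ (s + π / 2) := by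
  rw [sub_eq_add_neg, circlePoint_add, cos_neg, sin_neg, neg_smul, ← sub_eq_add_neg]

theorem norm_circlePoint {e₁ e₂ : E} (he₁ : ‖e₁‖ = 1) (he₂ : ‖e₂‖ = 1)
    (he : (inner ℝ e₁ e₂ : ℝ) = 0) (t : ℝ) : ‖circlePoint e₁ e₂ t‖ = 1 := by
  have horth : (inner ℝ (cos t • e₁) (sin t • e₂) : ℝ) = 0 := by
    simp [real_inner_smul_left, real_inner_smul_right, he]
  have hsq : ‖circlePoint e₁ e₂ t‖ ^ 2 = 1 := by
    rw [circlePoint, sq, norm_add_sq_eq_norm_sq_add_norm_sq_real horth, norm_smul, norm_smul,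
      he₁, he₂, norm_eq_abs, norm_eq_abs]
    nlinarith [sin_sq_add_cos_sq t, sq_abs (sin t), sq_abs (cos t)]
  exact (pow_eq_one_iff_of_nonneg (norm_nonneg _) two_ne_zero).mp hsq

end CirclePoint

theorem symm_bilin_apply_add_sub {R M : Type*} [CommRing R] [AddCommGroup M] [Module R M]
    (L : M →ₗ[R] M →ₗ[R] R) (hL : ∀ u v, L u v = L v u) (a b : R) (u w : M) :
    L (a • u + b • w) (a • u - b • w) = a ^ 2 * L u u - b ^ 2 * L w w := by
  simp only [map_add, map_sub, map_smul, LinearMap.add_apply, LinearMap.smul_apply,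
    smul_eq_mul, hL w u]
  ring

theorem ne_zero_of_linearIndependent_add_sub {R M : Type*} [Ring R] [Nontrivial R]
    [AddCommGroup M] [Module R M] {a b : R} {u w : M}
    (h : LinearIndependent R ![a • u + b • w, a • u - b • w]) : a ≠ 0 ∧ b ≠ 0 := by
  constructor
  · rintro rfl
    have := LinearIndependent.pair_iff.mp h 1 1 (by simp)
    exact one_ne_zero this.1
  · rintro rfl
    exact zero_ne_one (h.injective (by simp) : (0 : Fin 2) = 1)

theorem eq_one_and_eq_neg_one_of_mul_sub_mul_eq_one {K : Type*} [CommRing K] [LinearOrder K]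
    [IsStrictOrderedRing K] {c s P W : K} (hc : 0 < c) (hs : 0 < s) (hcs : c + s = 1)
    (hP : P ≤ 1) (hW : -1 ≤ W) (h : c * P - s * W = 1) : P = 1 ∧ W = -1 := by
  constructor <;> nlinarith

theorem symmetric_bilinear_norm_one_rotation_general
    {n : ℕ} (L : EuclideanSpace ℝ (Fin n) →ₗ[ℝ] EuclideanSpace ℝ (Fin n) →ₗ[ℝ] ℝ)
    (hsym : ∀ u v, L u v = L v u)
    (hbound : ∀ u v, |L u v| ≤ ‖u‖ * ‖v‖)
    (x y : EuclideanSpace ℝ (Fin n))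
    (hind : LinearIndependent ℝ ![x, y])
    (hLxy : L x y = 1)
    (e₁ e₂ : EuclideanSpace ℝ (Fin n))
    (he₁ : ‖e₁‖ = 1) (he₂ : ‖e₂‖ = 1) (he : (inner ℝ e₁ e₂ : ℝ) = 0)
    (θ ψ α : ℝ)
    (hxe : x = Real.cos θ • e₁ + Real.sin θ • e₂)
    (hye : y = Real.cos ψ • e₁ + Real.sin ψ • e₂) :
    L (Real.cos (θ + α) • e₁ + Real.sin (θ + α) • e₂)
      (Real.cos (ψ - α) • e₁ + Real.sin (ψ - α) • e₂) = 1 := by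
  obtain ⟨m, d, rfl, rfl⟩ : ∃ m d, θ = m + d ∧ ψ = m - d :=
    ⟨(θ + ψ) / 2, (θ - ψ) / 2, by ring, by ring⟩
  set u := circlePoint e₁ e₂ m
  set w := circlePoint e₁ e₂ (m + π / 2)
  have key (β : ℝ) : L (circlePoint e₁ e₂ (m + β)) (circlePoint e₁ e₂ (m - β)) =
      cos β ^ 2 * L u u - sin β ^ 2 * L w w := by
    rw [circlePoint_add, circlePoint_sub, symm_bilin_apply_add_sub L hsym]
  have hx : x = cos d • u + sin d • w := by
    rw [hxe, ← circlePoint_add, circlePoint]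
  have hy : y = cos d • u - sin d • w := by
    rw [hye, ← circlePoint_sub, circlePoint]
  obtain ⟨hcos, hsin⟩ := ne_zero_of_linearIndependent_add_sub (hx ▸ hy ▸ hind)
  have hu : L u u ≤ 1 := by
    simpa [u, norm_circlePoint he₁ he₂ he] using (abs_le.mp (hbound u u)).2
  have hw : -1 ≤ L w w := by
    simpa [w, norm_circlePoint he₁ he₂ he] using (abs_le.mp (hbound w w)).1
  obtain ⟨huu, hww⟩ := eq_one_and_eq_neg_one_of_mul_sub_mul_eq_one (sq_pos_of_ne_zero hcos)
    (sq_pos_of_ne_zero hsin) (cos_sq_add_sin_sq d) hu hw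
    (by rw [← symm_bilin_apply_add_sub L hsym, ← hx, ← hy, hLxy])
  change L (circlePoint e₁ e₂ (m + d + α)) (circlePoint e₁ e₂ (m - d - α)) = 1
  rw [add_assoc, sub_sub, key, huu, hww]
  linear_combination cos_sq_add_sin_sq (d + α)

/-- Let `L` be a symmetric bilinear form on `ℝⁿ` of operator norm one and
`x, y` linearly independent unit vectors with `L x y = 1`.  If `x̃` is obtained from `x` by a
rotation of angle `α` in the plane `span{x,y}` and `ỹ` is obtained from `y` by a rotation of
angle `α` in the opposite direction (expressed in an orthonormal basis `e₁, e₂` of the plane,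
with `x = cos θ e₁ + sin θ e₂` and `y = cos ψ e₁ + sin ψ e₂`), then `L x̃ ỹ = 1`. -/
theorem symmetric_bilinear_norm_one_rotation
    {n : ℕ} (L : EuclideanSpace ℝ (Fin n) →ₗ[ℝ] EuclideanSpace ℝ (Fin n) →ₗ[ℝ] ℝ)
    (hsym : ∀ u v, L u v = L v u)
    (hbound : ∀ u v, |L u v| ≤ ‖u‖ * ‖v‖)
    (x y : EuclideanSpace ℝ (Fin n))
    (hx : ‖x‖ = 1) (hy : ‖y‖ = 1)
    (hind : LinearIndependent ℝ ![x, y])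
    (hLxy : L x y = 1)
    (e₁ e₂ : EuclideanSpace ℝ (Fin n))
    (he₁ : ‖e₁‖ = 1) (he₂ : ‖e₂‖ = 1) (he : (inner ℝ e₁ e₂ : ℝ) = 0)
    (θ ψ α : ℝ)
    (hxe : x = Real.cos θ • e₁ + Real.sin θ • e₂)
    (hye : y = Real.cos ψ • e₁ + Real.sin ψ • e₂) :
    L (Real.cos (θ + α) • e₁ + Real.sin (θ + α) • e₂)
      (Real.cos (ψ - α) • e₁ + Real.sin (ψ - α) • e₂) = 1 :=
  symmetric_bilinear_norm_one_rotation_general L hsym hbound x y hind hLxy e₁ e₂ he₁ he₂ he θ ψ α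
    hxe hye
end

section
/- Let H be a real or complex inner product space of dimension at least 3, let d > 1, and let x₁, ..., x_d be unit vectors in H. If there exists a symmetric continuous d-linear form L of norm one attaining its norm at (x₁,...,x_d) (i.e., |L(x₁,...,x_d)| = 1), then there exist infinitely many symmetric d-linear forms of norm one attaining their norm at (x₁,...,x_d). -/
/-!
If some unit vector `e` is orthogonal to every `xᵢ`, the forms
`T_s(y) = L(Qy₁, …, Qy_d) + s ∏ ⟪e, yᵢ⟫`, `s ∈ [0, 1]`, with `Q` the orthogonal projection onto
`eᗮ`, are symmetric, agree with `L` at `x`, are pairwise distinct (`T_s(e, …, e) = s`) and have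
norm at most one: by Pythagoras `‖Qz‖² + |⟪e, z⟫|² = ‖z‖²`, and `∏ aᵢ + ∏ bᵢ ≤ ∏ cᵢ` for
nonnegative reals with `aᵢ² + bᵢ² ≤ cᵢ²` as soon as `d ≥ 2`.

Such an `e` exists because the `xᵢ` span at most two dimensions. Otherwise, freezing all but
three arguments of `L` at `x` gives a symmetric trilinear form `ψ` of norm at most one with
`|ψ(a, b, c)| = 1` for linearly independent unit vectors `a, b, c`. A functional of norm at most
one that attains its norm at a unit vector `u` is a multiple of `⟪u, ·⟫`. Applied to the partial
maps of `ψ`, this shows that `ψ` attains its norm at `(m, m, c)` whenever `m` normalises `a + b`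
or `a - b`, and then that `ψ(c, c, ·) = ψ(m, m, c) ⟪r m - c, ·⟫` for a real `r`. Comparing the
two resulting expressions for `ψ(c, c, ·)` puts `c` in the span of `a` and `b`.
-/

open scoped InnerProductSpace
open Function Submodule

theorem prod_add_prod_le_prod {ι : Type*} [Fintype ι] [Nontrivial ι] {a b c : ι → ℝ}
    (ha : ∀ i, 0 ≤ a i) (hb : ∀ i, 0 ≤ b i) (hc : ∀ i, 0 ≤ c i)
    (h : ∀ i, a i ^ 2 + b i ^ 2 ≤ c i ^ 2) : ∏ i, a i + ∏ i, b i ≤ ∏ i, c i := by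
  classical
  obtain ⟨i, j, hij⟩ := exists_pair_ne ι
  have hj : j ∈ Finset.univ.erase i := by simpa using hij.symm
  simp only [← Finset.mul_prod_erase _ _ (Finset.mem_univ i), ← Finset.mul_prod_erase _ _ hj,
    ← mul_assoc]
  set s := (Finset.univ.erase i).erase j
  have hac : ∀ l, a l ≤ c l := fun l => by nlinarith [h l, ha l, hc l, sq_nonneg (b l)]
  have hbc : ∀ l, b l ≤ c l := fun l => by nlinarith [h l, hb l, hc l, sq_nonneg (a l)]
  -- Cauchy–Schwarz in `ℝ²`
  have hij_le : a i * a j + b i * b j ≤ c i * c j := by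
    refine le_of_sq_le_sq ?_ (mul_nonneg (hc i) (hc j))
    nlinarith [sq_nonneg (a i * b j - a j * b i),
      mul_le_mul (h i) (h j) (by positivity) (sq_nonneg (c i))]
  have hA := Finset.prod_le_prod (s := s) (fun l _ => ha l) (fun l _ => hac l)
  have hB := Finset.prod_le_prod (s := s) (fun l _ => hb l) (fun l _ => hbc l)
  calc a i * a j * ∏ l ∈ s, a l + b i * b j * ∏ l ∈ s, b l
      ≤ a i * a j * ∏ l ∈ s, c l + b i * b j * ∏ l ∈ s, c l :=
        add_le_add (mul_le_mul_of_nonneg_left hA (mul_nonneg (ha i) (ha j)))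
          (mul_le_mul_of_nonneg_left hB (mul_nonneg (hb i) (hb j)))
    _ = (a i * a j + b i * b j) * ∏ l ∈ s, c l := by ring
    _ ≤ c i * c j * ∏ l ∈ s, c l :=
        mul_le_mul_of_nonneg_right hij_le (Finset.prod_nonneg fun l _ => hc l)

theorem Function.update_update_comp_swap {α β : Type*} [DecidableEq α] (y : α → β) {a b : α}
    (hab : a ≠ b) (u v : β) :
    update (update y a u) b v ∘ Equiv.swap a b = update (update y a v) b u := by
  ext l
  simp only [comp_apply, update_apply, Equiv.swap_apply_def]
  split_ifs <;> simp_all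

theorem exists_embedding_linearIndependent_comp {K V ι : Type*} [DivisionRing K]
    [AddCommGroup V] [Module K V] {x : ι → V} (hx : span K (Set.range x) = ⊤) {n : ℕ}
    (hn : n ≤ Module.rank K V) : ∃ g : Fin n ↪ ι, LinearIndependent K (x ∘ g) := by
  obtain ⟨κ, a, ha, hspan, hli⟩ := exists_linearIndependent' K x
  obtain ⟨f⟩ : Nonempty (Fin n ↪ Set.range (x ∘ a)) := by
    rwa [← Cardinal.lift_mk_le', Cardinal.mk_fin, Cardinal.lift_natCast, Cardinal.lift_uzero,
      ← rank_span hli, hspan, hx, rank_top]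
  let s : Set.range (x ∘ a) ↪ κ := ⟨Set.rangeSplitting _, Set.rangeSplitting_injective _⟩
  exact ⟨(f.trans s).trans ⟨a, ha⟩, hli.comp _ (f.trans s).injective⟩

section InnerProductSpace

variable {𝕜 : Type*} [RCLike 𝕜] {H : Type*} [NormedAddCommGroup H] [InnerProductSpace 𝕜 H]

theorem exists_norm_eq_one_forall_inner_eq_zero {ι : Type*} [Finite ι] {x : ι → H}
    (hx : span 𝕜 (Set.range x) ≠ ⊤) : ∃ e : H, ‖e‖ = 1 ∧ ∀ i, ⟪e, x i⟫_𝕜 = 0 := by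
  have : FiniteDimensional 𝕜 (span 𝕜 (Set.range x)) :=
    FiniteDimensional.span_of_finite 𝕜 (Set.finite_range x)
  obtain ⟨e, he, he0⟩ := exists_mem_ne_zero_of_ne_bot (mt orthogonal_eq_bot_iff.mp hx)
  exact ⟨(‖e‖⁻¹ : 𝕜) • e, norm_smul_inv_norm he0, fun i =>
    inner_left_of_mem_orthogonal (subset_span (Set.mem_range_self i)) (smul_mem _ _ he)⟩

theorem LinearMap.eq_mul_inner_of_norm_apply_le {f : H →ₗ[𝕜] 𝕜} (hf : ∀ z, ‖f z‖ ≤ ‖z‖)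
    {u : H} (hu : ‖u‖ = 1) (hfu : ‖f u‖ = 1) (z : H) : f z = f u * ⟪u, z⟫_𝕜 := by
  set w := z - ⟪u, z⟫_𝕜 • u
  have huw : ⟪u, w⟫_𝕜 = 0 := by
    simp [w, inner_sub_right, inner_smul_right, inner_self_eq_norm_sq_to_K, hu]
  suffices hw : f w = 0 by
    calc f z = f (⟪u, z⟫_𝕜 • u + w) := by simp [w]
      _ = f u * ⟪u, z⟫_𝕜 := by rw [map_add, map_smul, hw, add_zero, smul_eq_mul, mul_comm]
  by_contra hw
  -- moving `u` a little in the direction `t • w` would push `‖f‖` above one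
  set s : ℝ := (1 + ‖w‖ ^ 2)⁻¹
  set t : 𝕜 := (s : 𝕜) * starRingEnd 𝕜 (f w) * f u
  have hs : 0 < s := by positivity
  have hval : f (u + t • w) = f u * ((1 + s * ‖f w‖ ^ 2 : ℝ) : 𝕜) := by
    simp only [map_add, map_smul, smul_eq_mul, t]
    push_cast
    rw [← RCLike.conj_mul]
    ring
  have hnorm : ‖u + t • w‖ ^ 2 = 1 + s ^ 2 * ‖f w‖ ^ 2 * ‖w‖ ^ 2 := by
    rw [@norm_add_sq 𝕜, inner_smul_right, huw]
    simp [t, norm_smul, hu, hfu, mul_pow]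
  have key := pow_le_pow_left₀ (norm_nonneg _) (hf (u + t • w)) 2
  rw [hval, hnorm, norm_mul, hfu, one_mul, RCLike.norm_ofReal, abs_of_pos (by positivity)] at key
  have hfw : 0 < ‖f w‖ ^ 2 := by positivity
  have hsw : s * ‖w‖ ^ 2 < 1 := by
    rw [inv_mul_lt_one₀ (by positivity)]
    linarith
  nlinarith [mul_pos hs hfw, mul_pos (mul_pos hs hfw) hs]

structure IsSymmNormLeOne (ψ : H →ₗ[𝕜] H →ₗ[𝕜] H →ₗ[𝕜] 𝕜) : Prop where
  swap₁₂ : ∀ u v w, ψ u v w = ψ v u w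
  swap₂₃ : ∀ u v w, ψ u v w = ψ u w v
  norm_le : ∀ u v w, ‖ψ u v w‖ ≤ ‖u‖ * ‖v‖ * ‖w‖

namespace IsSymmNormLeOne

variable {ψ : H →ₗ[𝕜] H →ₗ[𝕜] H →ₗ[𝕜] 𝕜} {a b c u v w : H}

theorem apply_eq_mul_inner (hψ : IsSymmNormLeOne ψ) (hu : ‖u‖ = 1) (hv : ‖v‖ = 1)
    (hw : ‖w‖ = 1) (h : ‖ψ u v w‖ = 1) (z : H) : ψ u v z = ψ u v w * ⟪w, z⟫_𝕜 :=
  LinearMap.eq_mul_inner_of_norm_apply_le (fun z => by simpa [hu, hv] using hψ.norm_le u v z)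
    hw h z

theorem apply_add_smul_add_smul (hψ : IsSymmNormLeOne ψ) (ha : ‖a‖ = 1) (hb : ‖b‖ = 1)
    (hc : ‖c‖ = 1) (h : ‖ψ a b c‖ = 1) {s : 𝕜} (hs : ‖s‖ = 1) :
    ψ (a + s • b) (a + s • b) c = s * ψ a b c * (‖a + s • b‖ : 𝕜) ^ 2 := by
  have hbac : ψ b a c = ψ a b c := (hψ.swap₁₂ a b c).symm
  have hacb : ψ a c b = ψ a b c := (hψ.swap₂₃ a b c).symm
  have hbca : ψ b c a = ψ a b c := by rw [← hψ.swap₂₃, hbac]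
  have haac : ψ a a c = ψ a b c * ⟪b, a⟫_𝕜 := by
    rw [hψ.swap₂₃, hψ.apply_eq_mul_inner ha hc hb (by rwa [hacb]), hacb]
  have hbbc : ψ b b c = ψ a b c * ⟪a, b⟫_𝕜 := by
    rw [hψ.swap₂₃, hψ.apply_eq_mul_inner hb hc ha (by rwa [hbca]), hbca]
  have hss : starRingEnd 𝕜 s * s = 1 := by rw [RCLike.conj_mul, hs]; simp
  have haa : ⟪a, a⟫_𝕜 = 1 := by rw [inner_self_eq_norm_sq_to_K, ha]; simp
  have hbb : ⟪b, b⟫_𝕜 = 1 := by rw [inner_self_eq_norm_sq_to_K, hb]; simp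
  rw [← inner_self_eq_norm_sq_to_K]
  simp only [map_add, map_smul, LinearMap.add_apply, LinearMap.smul_apply, smul_eq_mul,
    inner_add_left, inner_add_right, inner_smul_left, inner_smul_right,
    haac, hbbc, hbac, haa, hbb]
  linear_combination (-(ψ a b c * ⟪b, a⟫_𝕜 + ψ a b c * s)) * hss

theorem apply_normalize (hψ : IsSymmNormLeOne ψ) (ha : ‖a‖ = 1) (hb : ‖b‖ = 1)
    (hc : ‖c‖ = 1) (h : ‖ψ a b c‖ = 1) {s : 𝕜} (hs : ‖s‖ = 1) (hab : a + s • b ≠ 0) :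
    ψ ((‖a + s • b‖⁻¹ : 𝕜) • (a + s • b)) ((‖a + s • b‖⁻¹ : 𝕜) • (a + s • b)) c =
      s * ψ a b c := by
  have : (‖a + s • b‖ : 𝕜) ≠ 0 := by simpa using hab
  simp only [map_smul, LinearMap.smul_apply, smul_eq_mul,
    hψ.apply_add_smul_add_smul ha hb hc h hs]
  field_simp

theorem apply_self_self_eq_mul_inner (hψ : IsSymmNormLeOne ψ) (hu : ‖u‖ = 1) (hv : ‖v‖ = 1)
    (h : ‖ψ u u v‖ = 1) (z : H) :
    ψ v v z = ψ u u v * ⟪((‖u + v‖ ^ 2 - 2 : ℝ) : 𝕜) • u - v, z⟫_𝕜 := by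
  by_cases huv : u + v = 0
  · obtain rfl : v = -u := eq_neg_of_add_eq_zero_right huv
    have huuu : ‖ψ u u u‖ = 1 := by simpa using h
    simp only [map_neg, LinearMap.neg_apply, neg_neg, huv, norm_zero,
      hψ.apply_eq_mul_inner hu hu hu huuu z, inner_sub_left, inner_smul_left,
      RCLike.conj_ofReal, inner_neg_left]
    push_cast
    ring
  have huvu : ψ u v u = ψ u u v := (hψ.swap₂₃ u u v).symm
  set n := (‖u + (1 : 𝕜) • v‖⁻¹ : 𝕜) • (u + (1 : 𝕜) • v)
  have hn : ‖n‖ = 1 := norm_smul_inv_norm (by simpa using huv)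
  have hnnu : ψ n n u = ψ u u v := by
    rw [hψ.apply_normalize hu hv hu (by rwa [huvu]) (by simp) (by simpa using huv), huvu,
      one_mul]
  have hnnz := hψ.apply_eq_mul_inner hn hn hu (by rwa [hnnu]) z
  have huuz := hψ.apply_eq_mul_inner hu hu hv h z
  have huvz := hψ.apply_eq_mul_inner hu hv hu (by rwa [huvu]) z
  rw [hnnu] at hnnz
  rw [huvu] at huvz
  have : (‖u + v‖ : 𝕜) ≠ 0 := by simpa using huv
  simp only [n, one_smul, map_smul, map_add, LinearMap.add_apply, LinearMap.smul_apply,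
    smul_eq_mul, ← hψ.swap₁₂ u v z, huuz, huvz] at hnnz
  rw [inner_sub_left, inner_smul_left, RCLike.conj_ofReal]
  field_simp at hnnz
  push_cast
  linear_combination hnnz

theorem not_linearIndependent (hψ : IsSymmNormLeOne ψ) (ha : ‖a‖ = 1) (hb : ‖b‖ = 1)
    (hc : ‖c‖ = 1) (h : ‖ψ a b c‖ = 1) : ¬ LinearIndependent 𝕜 ![a, b, c] := by
  intro hli
  have hcoeff : ∀ p q r : 𝕜, p • a + q • b + r • c = 0 → p = 0 ∧ r = 0 := fun p q r hpqr => by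
    have := Fintype.linearIndependent_iff.mp hli ![p, q, r]
      (by simpa [Fin.sum_univ_three] using hpqr)
    exact ⟨this 0, this 2⟩
  have hne : ∀ s : 𝕜, a + s • b ≠ 0 := fun s hs =>
    one_ne_zero (hcoeff 1 s 0 (by simpa using hs)).1
  set m : 𝕜 → H := fun s => (‖a + s • b‖⁻¹ : 𝕜) • (a + s • b)
  set r : 𝕜 → 𝕜 := fun s => ((‖m s + c‖ ^ 2 - 2 : ℝ) : 𝕜)
  have hcc : ∀ s : 𝕜, ‖s‖ = 1 → ∀ z, ψ c c z = s * ψ a b c * ⟪r s • m s - c, z⟫_𝕜 :=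
    fun s hs z => by
      have hm := hψ.apply_normalize ha hb hc h hs (hne s)
      rw [← hm]
      exact hψ.apply_self_self_eq_mul_inner (norm_smul_inv_norm (hne s)) hc
        (by rw [hm, norm_mul, hs, h, one_mul]) z
  have hμ : ψ a b c ≠ 0 := by rw [← norm_ne_zero_iff, h]; exact one_ne_zero
  have hrel : r 1 • m 1 - c = -(r (-1) • m (-1) - c) := ext_inner_right 𝕜 fun z => by
    have hneg := hcc (-1) (by simp) z
    rw [hcc 1 (by simp) z] at hneg
    rw [inner_neg_left]
    exact mul_left_cancel₀ hμ (by linear_combination hneg)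
  have := hcoeff (r 1 * ‖a + b‖⁻¹ + r (-1) * ‖a - b‖⁻¹) (r 1 * ‖a + b‖⁻¹ - r (-1) * ‖a - b‖⁻¹)
    (-2) (by
      simp only [m, one_smul, neg_one_smul, ← sub_eq_add_neg] at hrel
      linear_combination (norm := module) hrel)
  norm_num at this

end IsSymmNormLeOne

namespace MultilinearMap

section Slice

variable {ι : Type*} [DecidableEq ι] (L : MultilinearMap 𝕜 (fun _ : ι => H) 𝕜) (x : ι → H)
  {i j k : ι}

def sliceThree (hij : i ≠ j) (hik : i ≠ k) (hjk : j ≠ k) : H →ₗ[𝕜] H →ₗ[𝕜] H →ₗ[𝕜] 𝕜 :=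
  LinearMap.mk₂ 𝕜 (fun u v => L.toLinearMap (update (update x i u) j v) k)
    (fun u u' v => by
      ext w
      simp only [toLinearMap_apply, LinearMap.add_apply, update_comm hij, update_comm hik]
      exact L.map_update_add _ i u u')
    (fun r u v => by
      ext w
      simp only [toLinearMap_apply, LinearMap.smul_apply, update_comm hij, update_comm hik]
      exact L.map_update_smul _ i r u)
    (fun u v v' => by
      ext w
      simp only [toLinearMap_apply, LinearMap.add_apply, update_comm hjk]
      exact L.map_update_add _ j v v')
    (fun r u v => by
      ext w
      simp only [toLinearMap_apply, LinearMap.smul_apply, update_comm hjk]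
      exact L.map_update_smul _ j r v)

variable {L x}

@[simp]
theorem sliceThree_apply (hij : i ≠ j) (hik : i ≠ k) (hjk : j ≠ k) (u v w : H) :
    L.sliceThree x hij hik hjk u v w = L (update (update (update x i u) j v) k w) := rfl

variable [Fintype ι]

theorem isSymmNormLeOne_sliceThree (hL : ∀ (η : Equiv.Perm ι) (y : ι → H), L (y ∘ η) = L y)
    (hLbound : ∀ y : ι → H, ‖L y‖ ≤ ∏ i, ‖y i‖) (hx : ∀ i, ‖x i‖ = 1) (hij : i ≠ j)
    (hik : i ≠ k) (hjk : j ≠ k) : IsSymmNormLeOne (L.sliceThree x hij hik hjk) where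
  swap₁₂ u v w := by
    have : update (update (update x i v) j u) k w
        = update (update (update x i u) j v) k w ∘ Equiv.swap i j := by
      rw [update_comp_equiv, Equiv.symm_swap, Equiv.swap_apply_of_ne_of_ne hik.symm hjk.symm,
        update_update_comp_swap _ hij]
    rw [sliceThree_apply, sliceThree_apply, this, hL]
  swap₂₃ u v w := by
    rw [sliceThree_apply, sliceThree_apply, ← update_update_comp_swap _ hjk, hL]
  norm_le u v w := by
    refine (hLbound _).trans_eq ?_
    have : (fun l => ‖update (update (update x i u) j v) k w l‖) =
        update (update (update (fun _ => (1 : ℝ)) i ‖u‖) j ‖v‖) k ‖w‖ := by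
      ext l
      simp only [update_apply]
      split_ifs <;> simp [hx]
    rw [this, Finset.prod_update_of_mem (Finset.mem_univ _),
      Finset.prod_update_of_mem (by simpa using hjk),
      Finset.prod_update_of_mem (by simpa using ⟨hik, hij⟩)]
    simp only [Finset.prod_const_one, mul_one]
    ring

theorem not_linearIndependent_comp_of_norm_apply_eq_one
    (hL : ∀ (η : Equiv.Perm ι) (y : ι → H), L (y ∘ η) = L y)
    (hLbound : ∀ y : ι → H, ‖L y‖ ≤ ∏ i, ‖y i‖) (hx : ∀ i, ‖x i‖ = 1) (hLx : ‖L x‖ = 1)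
    (g : Fin 3 ↪ ι) : ¬ LinearIndependent 𝕜 (x ∘ g) := by
  have hψ := isSymmNormLeOne_sliceThree hL hLbound hx
    (g.injective.ne (by decide : (0 : Fin 3) ≠ 1)) (g.injective.ne (by decide : (0 : Fin 3) ≠ 2))
    (g.injective.ne (by decide : (1 : Fin 3) ≠ 2))
  have hxg : x ∘ g = ![x (g 0), x (g 1), x (g 2)] := by
    ext t
    fin_cases t <;> rfl
  rw [hxg]
  exact hψ.not_linearIndependent (hx _) (hx _) (hx _) (by simpa [update_eq_self] using hLx)

end Slice

section Perturb

variable {ι : Type*} [Fintype ι] (L : MultilinearMap 𝕜 (fun _ : ι => H) 𝕜) (e : H) (s : 𝕜)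

noncomputable def perturbAlong : MultilinearMap 𝕜 (fun _ : ι => H) 𝕜 :=
  L.compLinearMap (fun _ => ((𝕜 ∙ e)ᗮ.starProjection : H →ₗ[𝕜] H)) +
    s • (MultilinearMap.mkPiAlgebra 𝕜 ι 𝕜).compLinearMap (fun _ => innerₛₗ 𝕜 e)

@[simp]
theorem perturbAlong_apply (y : ι → H) :
    L.perturbAlong e s y =
      L (fun l => (𝕜 ∙ e)ᗮ.starProjection (y l)) + s * ∏ l, ⟪e, y l⟫_𝕜 := by
  simp [perturbAlong]

variable {L e s}

theorem perturbAlong_comp_perm (hL : ∀ (η : Equiv.Perm ι) (y : ι → H), L (y ∘ η) = L y)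
    (η : Equiv.Perm ι) (y : ι → H) : L.perturbAlong e s (y ∘ η) = L.perturbAlong e s y := by
  simp only [perturbAlong_apply, comp_apply, Equiv.prod_comp η fun l => ⟪e, y l⟫_𝕜]
  rw [← hL η fun l => (𝕜 ∙ e)ᗮ.starProjection (y l)]
  rfl

theorem norm_perturbAlong_apply_le [Nontrivial ι] (hLbound : ∀ y : ι → H, ‖L y‖ ≤ ∏ i, ‖y i‖)
    (he : ‖e‖ = 1) (hs : ‖s‖ ≤ 1) (y : ι → H) : ‖L.perturbAlong e s y‖ ≤ ∏ l, ‖y l‖ := by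
  have hpyth (z : H) : ‖(𝕜 ∙ e)ᗮ.starProjection z‖ ^ 2 + ‖⟪e, z⟫_𝕜‖ ^ 2 ≤ ‖z‖ ^ 2 := by
    rw [norm_sq_eq_add_norm_sq_starProjection z (𝕜 ∙ e), starProjection_unit_singleton 𝕜 he,
      norm_smul, he, mul_one, add_comm]
  calc ‖L.perturbAlong e s y‖
      ≤ ∏ l, ‖(𝕜 ∙ e)ᗮ.starProjection (y l)‖ + ∏ l, ‖⟪e, y l⟫_𝕜‖ := by
        rw [perturbAlong_apply, ← norm_prod]
        refine (norm_add_le _ _).trans (add_le_add (hLbound _) ?_)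
        rw [norm_mul]
        exact mul_le_of_le_one_left (norm_nonneg _) hs
    _ ≤ ∏ l, ‖y l‖ := prod_add_prod_le_prod (fun _ => norm_nonneg _) (fun _ => norm_nonneg _)
        (fun _ => norm_nonneg _) fun l => hpyth (y l)

theorem perturbAlong_apply_of_forall_inner_eq_zero [Nonempty ι] {x : ι → H}
    (hex : ∀ i, ⟪e, x i⟫_𝕜 = 0) : L.perturbAlong e s x = L x := by
  have hx (i : ι) : (𝕜 ∙ e)ᗮ.starProjection (x i) = x i :=
    starProjection_eq_self_iff.mpr (mem_orthogonal_singleton_iff_inner_right.mpr (hex i))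
  simp [hx, hex]

theorem perturbAlong_apply_const [Nonempty ι] (he : ‖e‖ = 1) :
    L.perturbAlong e s (fun _ => e) = s := by
  have hL0 : L (fun _ => 0) = 0 := L.map_zero
  rw [perturbAlong_apply, starProjection_orthogonalComplement_singleton_eq_zero, hL0]
  simp [he]

theorem infinite_setOf_symm_attaining_of_forall_inner_eq_zero [Nontrivial ι] {x : ι → H}
    (hL : ∀ (η : Equiv.Perm ι) (y : ι → H), L (y ∘ η) = L y)
    (hLbound : ∀ y : ι → H, ‖L y‖ ≤ ∏ i, ‖y i‖) (hLx : ‖L x‖ = 1) (he : ‖e‖ = 1)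
    (hex : ∀ i, ⟪e, x i⟫_𝕜 = 0) :
    {T : MultilinearMap 𝕜 (fun _ : ι => H) 𝕜 |
      (∀ (η : Equiv.Perm ι) (y : ι → H), T (y ∘ η) = T y) ∧
      (∀ y : ι → H, ‖T y‖ ≤ ∏ i, ‖y i‖) ∧ ‖T x‖ = 1}.Infinite := by
  have hinj : Injective fun s : ℝ => L.perturbAlong e (s : 𝕜) := fun s t hst => by
    simpa [perturbAlong_apply_const he] using congrArg (fun T => T fun _ => e) hst
  refine ((Set.Icc_infinite (zero_lt_one' ℝ)).image hinj.injOn).mono ?_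
  rintro _ ⟨s, hs, rfl⟩
  refine ⟨perturbAlong_comp_perm hL, norm_perturbAlong_apply_le hLbound he ?_, ?_⟩
  · simpa [abs_of_nonneg hs.1] using hs.2
  · rwa [perturbAlong_apply_of_forall_inner_eq_zero hex]

end Perturb

end MultilinearMap

end InnerProductSpace

/-- Let `H` be an inner product space over `ℝ` or `ℂ` of dimension at least 3,
`d > 1`, and `x₁, …, x_d` unit vectors.  If some symmetric continuous `d`-linear form of norm
one attains its norm at `(x₁, …, x_d)`, then infinitely many symmetric `d`-linear forms of norm
one attain their norm at `(x₁, …, x_d)`. -/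
theorem infinitely_many_symmetric_forms_attaining
    {𝕜 : Type*} [RCLike 𝕜] {H : Type*} [NormedAddCommGroup H] [InnerProductSpace 𝕜 H]
    (hdim : 3 ≤ Module.rank 𝕜 H) (d : ℕ) (hd : 1 < d)
    (x : Fin d → H) (hx : ∀ i, ‖x i‖ = 1)
    (L : MultilinearMap 𝕜 (fun _ : Fin d => H) 𝕜)
    (hLsym : ∀ (η : Equiv.Perm (Fin d)) (y : Fin d → H), L (y ∘ η) = L y)
    (hLbound : ∀ y : Fin d → H, ‖L y‖ ≤ ∏ i, ‖y i‖)
    (hLattain : ‖L x‖ = 1) :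
    {T : MultilinearMap 𝕜 (fun _ : Fin d => H) 𝕜 |
      (∀ (η : Equiv.Perm (Fin d)) (y : Fin d → H), T (y ∘ η) = T y) ∧
      (∀ y : Fin d → H, ‖T y‖ ≤ ∏ i, ‖y i‖) ∧ ‖T x‖ = 1}.Infinite := by
  have hspan : span 𝕜 (Set.range x) ≠ ⊤ := fun h => by
    obtain ⟨g, hg⟩ := exists_embedding_linearIndependent_comp h (n := 3) (by exact_mod_cast hdim)
    exact L.not_linearIndependent_comp_of_norm_apply_eq_one hLsym hLbound hx hLattain g hg
  obtain ⟨e, he, hex⟩ := exists_norm_eq_one_forall_inner_eq_zero hspan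
  have : Nontrivial (Fin d) := Fin.nontrivial_iff_two_le.mpr hd
  exact L.infinite_setOf_symm_attaining_of_forall_inner_eq_zero hLsym hLbound hLattain he hex
end

section
/- Let H be a real inner product space, d > 1, L a symmetric d-linear form on H of norm one, H₁ ⊆ H a finite-dimensional subspace, P : H → H₁ the orthogonal projection, and w a unit vector orthogonal to H₁. Then for any a ∈ [−1,1], the d-linear form L_a(y₁,...,y_d) := L(P y₁, ..., P y_d) + a ⟨y₁,w⟩⋯⟨y_d,w⟩ is symmetric and satisfies |L_a(y,...,y)| ≤ ‖y‖^d for all y ∈ H. -/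
/-!
Write `y = P y + Q y` with `Q` the projection onto `Kᗮ`. Since `w ∈ Kᗮ` is a unit vector,
`|⟪y, w⟫| ≤ ‖Q y‖`, so `|L_a(y,…,y)| ≤ ‖P y‖^d + ‖Q y‖^d`, and for `d ≥ 2` this is at most
`(‖P y‖² + ‖Q y‖²)^(d/2) = ‖y‖^d` by Pythagoras.
-/

open scoped RealInnerProductSpace

lemma pow_add_pow_le_pow_of_sq_add_sq_le {d : ℕ} (hd : 2 ≤ d) {p q r : ℝ} (hp : 0 ≤ p)
    (hq : 0 ≤ q) (hr : 0 ≤ r) (h : p ^ 2 + q ^ 2 ≤ r ^ 2) : p ^ d + q ^ d ≤ r ^ d := by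
  obtain ⟨k, rfl⟩ : ∃ k, d = 2 + k := ⟨d - 2, by omega⟩
  have hpr : p ≤ r := by nlinarith
  have hqr : q ≤ r := by nlinarith
  calc p ^ (2 + k) + q ^ (2 + k) = p ^ 2 * p ^ k + q ^ 2 * q ^ k := by ring
    _ ≤ p ^ 2 * r ^ k + q ^ 2 * r ^ k := by gcongr
    _ = (p ^ 2 + q ^ 2) * r ^ k := by ring
    _ ≤ r ^ 2 * r ^ k := by gcongr
    _ = r ^ (2 + k) := (pow_add r 2 k).symm

namespace Submodule

variable {𝕜 E : Type*} [RCLike 𝕜] [NormedAddCommGroup E] [InnerProductSpace 𝕜 E]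
  (K : Submodule 𝕜 E) [K.HasOrthogonalProjection]

theorem norm_starProjection_pow_add_le_norm_pow {d : ℕ} (hd : 2 ≤ d) (y : E) :
    ‖K.starProjection y‖ ^ d + ‖Kᗮ.starProjection y‖ ^ d ≤ ‖y‖ ^ d :=
  pow_add_pow_le_pow_of_sq_add_sq_le hd (norm_nonneg _) (norm_nonneg _) (norm_nonneg _)
    (norm_sq_eq_add_norm_sq_starProjection y K).ge

theorem norm_inner_le_norm_starProjection_orthogonal {w : E} (hwK : w ∈ Kᗮ) (hw : ‖w‖ ≤ 1)
    (y : E) : ‖inner 𝕜 y w‖ ≤ ‖Kᗮ.starProjection y‖ := by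
  have hQw : Kᗮ.starProjection w = w := Kᗮ.starProjection_eq_self_iff.mpr hwK
  calc ‖inner 𝕜 y w‖ = ‖inner 𝕜 (Kᗮ.starProjection y) w‖ := by
        rw [inner_starProjection_left_eq_right, hQw]
    _ ≤ ‖Kᗮ.starProjection y‖ * ‖w‖ := norm_inner_le_norm _ _
    _ ≤ ‖Kᗮ.starProjection y‖ := mul_le_of_le_one_right (norm_nonneg _) hw

end Submodule

/-- Let `H` be a real inner product space, `d > 1`, `L` a symmetric `d`-linear
form on `H` of norm one, `K ⊆ H` a finite-dimensional subspace with orthogonal projection `P`,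
and `w` a unit vector orthogonal to `K`.  Then for any `a ∈ [−1,1]` the `d`-linear form
`L_a(y₁,…,y_d) = L(P y₁, …, P y_d) + a ⟨y₁,w⟩⋯⟨y_d,w⟩` is symmetric and satisfies
`|L_a(y,…,y)| ≤ ‖y‖^d` for every `y`. -/
theorem perturbed_form_symmetric_and_bounded
    {H : Type*} [NormedAddCommGroup H] [InnerProductSpace ℝ H]
    (d : ℕ) (hd : 1 < d)
    (L : MultilinearMap ℝ (fun _ : Fin d => H) ℝ)
    (hLsym : ∀ (η : Equiv.Perm (Fin d)) (y : Fin d → H), L (y ∘ η) = L y)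
    (hLbound : ∀ y : Fin d → H, |L y| ≤ ∏ i, ‖y i‖)
    (K : Submodule ℝ H) [FiniteDimensional ℝ K]
    (w : H) (hw : ‖w‖ = 1) (hwK : w ∈ Kᗮ)
    (a : ℝ) (ha : a ∈ Set.Icc (-1 : ℝ) 1) :
    (∀ (η : Equiv.Perm (Fin d)) (y : Fin d → H),
        L (fun i => (K.orthogonalProjectionOnto ((y ∘ η) i) : H)) + a * ∏ i, ⟪(y ∘ η) i, w⟫
          = L (fun i => (K.orthogonalProjectionOnto (y i) : H)) + a * ∏ i, ⟪y i, w⟫) ∧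
    (∀ y : H,
        |L (fun _ => (K.orthogonalProjectionOnto y : H)) + a * ∏ _i : Fin d, ⟪y, w⟫| ≤ ‖y‖ ^ d) := by
  refine ⟨fun η y => ?_, fun y => ?_⟩
  · rw [← Equiv.prod_comp η fun i => ⟪y i, w⟫]
    exact congrArg (· + _) (hLsym η fun i => K.starProjection (y i))
  · have hL : |L (fun _ => K.starProjection y)| ≤ ‖K.starProjection y‖ ^ d := by
      simpa using hLbound fun _ => K.starProjection y
    have hinner : |⟪y, w⟫| ≤ ‖Kᗮ.starProjection y‖ :=
      K.norm_inner_le_norm_starProjection_orthogonal hwK hw.le y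
    calc |L (fun _ => K.starProjection y) + a * ∏ _i : Fin d, ⟪y, w⟫|
        ≤ |L (fun _ => K.starProjection y)| + |a| * |⟪y, w⟫| ^ d := by
          simpa [abs_mul, abs_pow] using abs_add_le _ (a * ⟪y, w⟫ ^ d)
      _ ≤ ‖K.starProjection y‖ ^ d + 1 * ‖Kᗮ.starProjection y‖ ^ d := by
          gcongr
          exact abs_le.mpr ha
      _ ≤ ‖y‖ ^ d := by simpa using K.norm_starProjection_pow_add_le_norm_pow hd y
end

section
/- Every symmetric tensor z ∈ ⊗^d ℂ² has symmetric decomposable rank 1; that is, there exist vectors z₁, ..., z_d ∈ ℂ² such that z = z₁ ∨ z₂ ∨ ⋯ ∨ z_d. -/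
/-!
A binary tensor `w` is recorded by the polynomial `∑ⱼ w(j) X^{|j|}`, where `|j|` counts the ones in
the multi-index `j`. The symmetrizer does not change this polynomial, and it sends `v₁ ⊗ ⋯ ⊗ v_d` to
`∏ᵢ (vᵢ(0) + vᵢ(1) X)`. A symmetric tensor is constant on each weight class, so it is determined
by its polynomial. Since a complex polynomial of degree at most `d` is a product of `d` polynomials
of degree at most one, every symmetric tensor is some `v₁ ∨ ⋯ ∨ v_d`.
-/

open scoped BigOperators

/-- The linear map permuting tensor factors: `(permLin η z) j = z (j ∘ η)`. -/
noncomputable def permLin (𝕜 : Type*) [RCLike 𝕜] (d n : ℕ) (η : Equiv.Perm (Fin d)) :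
    EuclideanSpace 𝕜 (Fin d → Fin n) →ₗ[𝕜] EuclideanSpace 𝕜 (Fin d → Fin n) where
  toFun z := WithLp.toLp 2 (fun j => z (j ∘ η))
  map_add' _ _ := rfl
  map_smul' _ _ := rfl

/-- A tensor is symmetric if it is invariant under all permutations of factors. -/
def IsSymTensor {𝕜 : Type*} [RCLike 𝕜] {d n : ℕ}
    (z : EuclideanSpace 𝕜 (Fin d → Fin n)) : Prop :=
  ∀ η : Equiv.Perm (Fin d), permLin 𝕜 d n η z = z

/-- The elementary tensor `x 1 ⊗ ⋯ ⊗ x d`. -/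
noncomputable def eTensor {𝕜 : Type*} [RCLike 𝕜] {d n : ℕ}
    (x : Fin d → EuclideanSpace 𝕜 (Fin n)) : EuclideanSpace 𝕜 (Fin d → Fin n) :=
  WithLp.toLp 2 (fun j => ∏ i, x i (j i))

/-- The symmetrization operator `σ`. -/
noncomputable def symmetrize {𝕜 : Type*} [RCLike 𝕜] {d n : ℕ}
    (z : EuclideanSpace 𝕜 (Fin d → Fin n)) : EuclideanSpace 𝕜 (Fin d → Fin n) :=
  ((d.factorial : 𝕜)⁻¹) • ∑ η : Equiv.Perm (Fin d), permLin 𝕜 d n η z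

/-- The decomposable symmetric tensor `x 1 ∨ ⋯ ∨ x d`. -/
noncomputable def vee {𝕜 : Type*} [RCLike 𝕜] {d n : ℕ}
    (x : Fin d → EuclideanSpace 𝕜 (Fin n)) : EuclideanSpace 𝕜 (Fin d → Fin n) :=
  symmetrize (eTensor x)

/-- The tensor rank. -/
noncomputable def tensorRank {𝕜 : Type*} [RCLike 𝕜] {d n : ℕ}
    (z : EuclideanSpace 𝕜 (Fin d → Fin n)) : ℕ :=
  sInf {r : ℕ | ∃ v : Fin r → Fin d → EuclideanSpace 𝕜 (Fin n), z = ∑ i, eTensor (v i)}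

/-- The symmetric decomposable rank. -/
noncomputable def symDecRank {𝕜 : Type*} [RCLike 𝕜] {d n : ℕ}
    (z : EuclideanSpace 𝕜 (Fin d → Fin n)) : ℕ :=
  sInf {r : ℕ | ∃ v : Fin r → Fin d → EuclideanSpace 𝕜 (Fin n), z = ∑ i, vee (v i)}

/-- The injective (spectral) norm. -/
noncomputable def injNorm {𝕜 : Type*} [RCLike 𝕜] {d n : ℕ}
    (z : EuclideanSpace 𝕜 (Fin d → Fin n)) : ℝ :=
  sSup {c : ℝ | ∃ y : Fin d → EuclideanSpace 𝕜 (Fin n),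
    (∀ i, ‖y i‖ = 1) ∧ c = ‖(inner 𝕜 (eTensor y) z : 𝕜)‖}

/-- The projective (nuclear) norm. -/
noncomputable def projNorm {𝕜 : Type*} [RCLike 𝕜] {d n : ℕ}
    (z : EuclideanSpace 𝕜 (Fin d → Fin n)) : ℝ :=
  sInf {c : ℝ | ∃ (r : ℕ) (v : Fin r → Fin d → EuclideanSpace 𝕜 (Fin n)),
    z = ∑ i, eTensor (v i) ∧ c = ∑ i, ∏ j, ‖v i j‖}

open Polynomial

theorem exists_prod_C_add_C_mul_X_eq {K : Type*} [Field K] [IsAlgClosed K] {d : ℕ} (hd : 0 < d)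
    {P : K[X]} (hP : P.natDegree ≤ d) : ∃ a b : Fin d → K, ∏ i, (C (a i) + C (b i) * X) = P := by
  induction d, hd using Nat.le_induction generalizing P with
  | base =>
    refine ⟨fun _ => P.coeff 0, fun _ => P.coeff 1, ?_⟩
    rw [eq_X_add_C_of_natDegree_le_one hP]
    simp [add_comm]
  | succ d hd ih =>
    rcases hP.lt_or_eq with hlt | hdeg
    · obtain ⟨a, b, h⟩ := ih (Nat.lt_succ_iff.mp hlt)
      refine ⟨Fin.snoc a 1, Fin.snoc b 0, ?_⟩
      simp [Fin.prod_univ_castSucc, h]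
    · obtain ⟨r, hr⟩ := IsAlgClosed.exists_root P (degree_ne_of_natDegree_ne (n := 0) (by omega))
      obtain ⟨a, b, h⟩ := ih (P := P /ₘ (X - C r)) (by
        rw [natDegree_divByMonic _ (monic_X_sub_C r), hdeg, natDegree_X_sub_C]; rfl)
      refine ⟨Fin.cons (-r) a, Fin.cons 1 b, ?_⟩
      rw [Fin.prod_univ_succ]
      simpa [h, add_comm, ← sub_eq_add_neg] using mul_divByMonic_eq_iff_isRoot.mpr hr

section weight

variable {d : ℕ}

def weight (j : Fin d → Fin 2) : ℕ := ∑ i, (j i : ℕ)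

lemma weight_le (j : Fin d → Fin 2) : weight j ≤ d :=
  (Finset.sum_le_sum fun i _ => Nat.lt_succ_iff.mp (j i).isLt).trans (by simp)

lemma weight_comp_perm (j : Fin d → Fin 2) (η : Equiv.Perm (Fin d)) :
    weight (j ∘ η) = weight j :=
  Equiv.sum_comp η fun i => (j i : ℕ)

lemma card_fiber_one_eq_weight (j : Fin d → Fin 2) : Fintype.card {i // j i = 1} = weight j := by
  have h (a : Fin 2) : (a : ℕ) = if a = 1 then 1 else 0 := by fin_cases a <;> rfl
  rw [Fintype.card_subtype, Finset.card_filter]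
  exact Finset.sum_congr rfl fun i _ => (h (j i)).symm

lemma card_fiber_zero_eq_sub_weight (j : Fin d → Fin 2) :
    Fintype.card {i // j i = 0} = Fintype.card (Fin d) - weight j := by
  rw [← card_fiber_one_eq_weight, ← Fintype.card_subtype_compl]
  exact Fintype.card_congr (Equiv.subtypeEquivRight fun i => by omega)

lemma exists_perm_comp_eq_of_weight_eq {j j' : Fin d → Fin 2} (h : weight j = weight j') :
    ∃ η : Equiv.Perm (Fin d), j ∘ η = j' := by
  have hcard (c : Fin 2) : Fintype.card {i // j' i = c} = Fintype.card {i // j i = c} := by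
    fin_cases c
    · simp [card_fiber_zero_eq_sub_weight, h]
    · simp [card_fiber_one_eq_weight, h]
  exact ⟨Equiv.ofFiberEquiv fun c => Fintype.equivOfCardEq (hcard c),
    funext (Equiv.ofFiberEquiv_map _)⟩

end weight

section weightPoly

open scoped Finset

variable {𝕜 : Type*} [RCLike 𝕜] {d : ℕ}

lemma IsSymTensor.apply_eq_of_weight_eq {w : EuclideanSpace 𝕜 (Fin d → Fin 2)}
    (hw : IsSymTensor w) {j j' : Fin d → Fin 2} (h : weight j = weight j') : w j = w j' := by
  obtain ⟨η, rfl⟩ := exists_perm_comp_eq_of_weight_eq h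
  exact (congrArg (· j) (hw η)).symm

lemma isSymTensor_symmetrize {n : ℕ} (w : EuclideanSpace 𝕜 (Fin d → Fin n)) :
    IsSymTensor (symmetrize w) := by
  intro η
  rw [symmetrize, map_smul, map_sum]
  congr 1
  exact Fintype.sum_equiv (Equiv.mulLeft η) _ _ fun _ => rfl

noncomputable def weightPoly : EuclideanSpace 𝕜 (Fin d → Fin 2) →ₗ[𝕜] 𝕜[X] :=
  ∑ j, monomial (weight j) ∘ₗ (EuclideanSpace.proj (𝕜 := 𝕜) j).toLinearMap

lemma weightPoly_apply (w : EuclideanSpace 𝕜 (Fin d → Fin 2)) :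
    weightPoly w = ∑ j, monomial (weight j) (w j) := by
  simp [weightPoly]

lemma coeff_weightPoly (w : EuclideanSpace 𝕜 (Fin d → Fin 2)) (k : ℕ) :
    (weightPoly w).coeff k = ∑ j with weight j = k, w j := by
  simp [weightPoly_apply, coeff_monomial, Finset.sum_filter]

lemma natDegree_weightPoly_le (w : EuclideanSpace 𝕜 (Fin d → Fin 2)) :
    (weightPoly w).natDegree ≤ d := by
  rw [weightPoly_apply]
  exact natDegree_sum_le_of_forall_le _ _ fun j _ =>
    (natDegree_monomial_le _).trans (weight_le j)

lemma weightPoly_permLin (η : Equiv.Perm (Fin d)) (w : EuclideanSpace 𝕜 (Fin d → Fin 2)) :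
    weightPoly (permLin 𝕜 d 2 η w) = weightPoly w := by
  simp only [weightPoly_apply]
  exact Fintype.sum_equiv (η.symm.arrowCongr (Equiv.refl _)) _ _ fun j => by
    rw [← weight_comp_perm j η]; rfl

lemma weightPoly_symmetrize (w : EuclideanSpace 𝕜 (Fin d → Fin 2)) :
    weightPoly (symmetrize w) = weightPoly w := by
  have hfact : (d.factorial : 𝕜) ≠ 0 := Nat.cast_ne_zero.mpr d.factorial_ne_zero
  simp only [symmetrize, map_smul, map_sum, weightPoly_permLin, Finset.sum_const,
    Finset.card_univ, Fintype.card_perm, Fintype.card_fin, ← Nat.cast_smul_eq_nsmul 𝕜, smul_smul,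
    inv_mul_cancel₀ hfact, one_smul]

lemma weightPoly_eTensor (v : Fin d → EuclideanSpace 𝕜 (Fin 2)) :
    weightPoly (eTensor v) = ∏ i, (C (v i 0) + C (v i 1) * X) := by
  have h (i : Fin d) : C (v i 0) + C (v i 1) * X = ∑ b : Fin 2, monomial b (v i b) := by
    simp [C_mul_X_eq_monomial]
  simp only [h, Finset.prod_univ_sum, Fintype.piFinset_univ, weightPoly_apply,
    ← C_mul_X_pow_eq_monomial, Finset.prod_mul_distrib, ← map_prod, Finset.prod_pow_eq_pow_sum]
  rfl

lemma IsSymTensor.coeff_weightPoly_weight {w : EuclideanSpace 𝕜 (Fin d → Fin 2)}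
    (hw : IsSymTensor w) (j : Fin d → Fin 2) :
    (weightPoly w).coeff (weight j) = #{j' : Fin d → Fin 2 | weight j' = weight j} * w j := by
  rw [coeff_weightPoly, Finset.sum_congr rfl (g := fun _ => w j) fun j' hj' =>
    hw.apply_eq_of_weight_eq (Finset.mem_filter.mp hj').2, Finset.sum_const, nsmul_eq_mul]

lemma IsSymTensor.ext_of_weightPoly_eq {w w' : EuclideanSpace 𝕜 (Fin d → Fin 2)}
    (hw : IsSymTensor w) (hw' : IsSymTensor w') (h : weightPoly w = weightPoly w') : w = w' := by
  ext j
  have hcard : (#{j' : Fin d → Fin 2 | weight j' = weight j} : 𝕜) ≠ 0 :=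
    Nat.cast_ne_zero.mpr <|
      Finset.card_ne_zero_of_mem (Finset.mem_filter.mpr ⟨Finset.mem_univ j, rfl⟩)
  exact mul_left_cancel₀ hcard <| by
    rw [← hw.coeff_weightPoly_weight, ← hw'.coeff_weightPoly_weight, h]

end weightPoly

/-- Every symmetric tensor in `⊗^d ℂ²` is a single decomposable symmetric
tensor: there are `z₁, …, z_d ∈ ℂ²` with `z = z₁ ∨ ⋯ ∨ z_d`. -/
theorem symmetric_tensor_C2_decomposable
    {d : ℕ} (hd : 0 < d)
    (z : EuclideanSpace ℂ (Fin d → Fin 2)) (hz : IsSymTensor z) :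
    ∃ v : Fin d → EuclideanSpace ℂ (Fin 2), z = vee v := by
  obtain ⟨a, b, hab⟩ := exists_prod_C_add_C_mul_X_eq hd (natDegree_weightPoly_le z)
  refine ⟨fun i => !₂[a i, b i], hz.ext_of_weightPoly_eq (isSymTensor_symmetrize _) ?_⟩
  rw [vee, weightPoly_symmetrize, weightPoly_eTensor, ← hab]
  rfl
end

section
/- Let z ∈ ⊗^d 𝕂ⁿ and let x₁,...,x_d ∈ 𝕂ⁿ be unit vectors maximizing the function (u₁,...,u_d) ↦ |⟨z, u₁∨⋯∨u_d⟩| / HS(u₁∨⋯∨u_d) over unit vectors u₁,...,u_d, and set λ = ⟨z, x₁∨⋯∨x_d⟩ / HS(x₁∨⋯∨x_d)². Then λ x₁∨⋯∨x_d is a best symmetric-decomposable-rank-1 approximation of z in the Hilbert–Schmidt norm: HS(z − λ x₁∨⋯∨x_d) ≤ HS(z − μ u₁∨⋯∨u_d) for all scalars μ and unit vectors u₁,...,u_d. In particular, a best symmetric-decomposable-rank-1 approximation always exists. -/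
open scoped BigOperators

/-!
With `λ = ⟪v, z⟫ / ‖v‖²`, `λ v` is the orthogonal projection of `z` onto the line through `v`, so by
Pythagoras `min_μ ‖z - μ v‖² = ‖z‖² - (|⟪v, z⟫| / ‖v‖)²`. The best error on the line through `v` is
thus a decreasing function of the ratio `|⟪v, z⟫| / ‖v‖`, and maximizing that ratio over
`v = u₁ ∨ ⋯ ∨ u_d` minimizes the error over all symmetric decomposable rank-one tensors.
The line lemmas hold for `v = 0` as well, where both quotients are `0`.
-/

open scoped InnerProductSpace

section LineApproximation

variable {𝕜 E : Type*} [RCLike 𝕜] [NormedAddCommGroup E] [InnerProductSpace 𝕜 E]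

theorem inner_sub_inner_div_norm_sq_smul_eq_zero (v z : E) :
    ⟪v, z - (⟪v, z⟫_𝕜 / (‖v‖ : 𝕜) ^ 2) • v⟫_𝕜 = 0 := by
  rcases eq_or_ne v 0 with rfl | hv
  · simp
  have hv' : (‖v‖ : 𝕜) ≠ 0 := RCLike.ofReal_ne_zero.mpr (norm_ne_zero_iff.mpr hv)
  rw [inner_sub_right, inner_smul_right, inner_self_eq_norm_sq_to_K,
    div_mul_cancel₀ _ (pow_ne_zero 2 hv'), sub_self]

theorem norm_sub_smul_sq_eq (z v : E) (μ : 𝕜) :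
    ‖z - μ • v‖ ^ 2 = ‖z - (⟪v, z⟫_𝕜 / (‖v‖ : 𝕜) ^ 2) • v‖ ^ 2
      + ‖(⟪v, z⟫_𝕜 / (‖v‖ : 𝕜) ^ 2 - μ) • v‖ ^ 2 := by
  set c : 𝕜 := ⟪v, z⟫_𝕜 / (‖v‖ : 𝕜) ^ 2
  have horth : ⟪z - c • v, (c - μ) • v⟫_𝕜 = 0 := by
    rw [inner_smul_right, ← inner_conj_symm, inner_sub_inner_div_norm_sq_smul_eq_zero, map_zero,
      mul_zero]
  have hsplit : z - μ • v = (z - c • v) + (c - μ) • v := by rw [sub_smul]; abel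
  rw [hsplit, sq, sq, sq, norm_add_sq_eq_norm_sq_add_norm_sq_of_inner_eq_zero _ _ horth]

theorem norm_sub_inner_div_norm_sq_smul_sq (z v : E) :
    ‖z - (⟪v, z⟫_𝕜 / (‖v‖ : 𝕜) ^ 2) • v‖ ^ 2 = ‖z‖ ^ 2 - (‖⟪v, z⟫_𝕜‖ / ‖v‖) ^ 2 := by
  have h := norm_sub_smul_sq_eq z v (0 : 𝕜)
  rw [zero_smul, sub_zero, sub_zero, norm_smul, norm_div, norm_pow, RCLike.norm_ofReal,
    abs_norm] at h
  rcases eq_or_ne v 0 with rfl | hv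
  · simp
  have hv' : ‖v‖ ≠ 0 := norm_ne_zero_iff.mpr hv
  rw [h]; field_simp; ring

theorem norm_sub_inner_div_norm_sq_smul_le (z v : E) (μ : 𝕜) :
    ‖z - (⟪v, z⟫_𝕜 / (‖v‖ : 𝕜) ^ 2) • v‖ ≤ ‖z - μ • v‖ := by
  refine le_of_sq_le_sq ?_ (norm_nonneg _)
  rw [norm_sub_smul_sq_eq z v μ]
  exact le_add_of_nonneg_right (sq_nonneg _)

theorem norm_sub_inner_div_norm_sq_smul_le_of_le {z v w : E}
    (h : ‖⟪w, z⟫_𝕜‖ / ‖w‖ ≤ ‖⟪v, z⟫_𝕜‖ / ‖v‖) (μ : 𝕜) :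
    ‖z - (⟪v, z⟫_𝕜 / (‖v‖ : 𝕜) ^ 2) • v‖ ≤ ‖z - μ • w‖ := by
  refine le_trans (le_of_sq_le_sq ?_ (norm_nonneg _)) (norm_sub_inner_div_norm_sq_smul_le z w μ)
  rw [norm_sub_inner_div_norm_sq_smul_sq, norm_sub_inner_div_norm_sq_smul_sq]
  gcongr

end LineApproximation

theorem best_symmetric_decomposable_rank_one_approximation_general
    {𝕜 : Type*} [RCLike 𝕜] {d n : ℕ}
    (z : EuclideanSpace 𝕜 (Fin d → Fin n))
    (x : Fin d → EuclideanSpace 𝕜 (Fin n)) (hx : ∀ i, ‖x i‖ = 1)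
    (hmax : ∀ u : Fin d → EuclideanSpace 𝕜 (Fin n), (∀ i, ‖u i‖ = 1) →
      ‖(inner 𝕜 (vee u) z : 𝕜)‖ / ‖vee u‖ ≤ ‖(inner 𝕜 (vee x) z : 𝕜)‖ / ‖vee x‖) :
    (∀ (μ : 𝕜) (u : Fin d → EuclideanSpace 𝕜 (Fin n)), (∀ i, ‖u i‖ = 1) →
        ‖z - ((inner 𝕜 (vee x) z : 𝕜) / ((‖vee x‖ : 𝕜) ^ 2)) • vee x‖ ≤ ‖z - μ • vee u‖) ∧
    (∃ (v : Fin d → EuclideanSpace 𝕜 (Fin n)) (c : 𝕜), (∀ i, ‖v i‖ = 1) ∧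
        ∀ (μ : 𝕜) (u : Fin d → EuclideanSpace 𝕜 (Fin n)), (∀ i, ‖u i‖ = 1) →
          ‖z - c • vee v‖ ≤ ‖z - μ • vee u‖) := by
  have best : ∀ (μ : 𝕜) (u : Fin d → EuclideanSpace 𝕜 (Fin n)), (∀ i, ‖u i‖ = 1) →
      ‖z - ((inner 𝕜 (vee x) z : 𝕜) / ((‖vee x‖ : 𝕜) ^ 2)) • vee x‖ ≤ ‖z - μ • vee u‖ :=
    fun μ u hu => norm_sub_inner_div_norm_sq_smul_le_of_le (hmax u hu) μ
  exact ⟨best, x, _, hx, best⟩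

/-- If unit vectors `x₁,…,x_d` maximize
`(u₁,…,u_d) ↦ |⟨z, u₁∨⋯∨u_d⟩| / HS(u₁∨⋯∨u_d)` over unit vectors and
`λ = ⟨z, x₁∨⋯∨x_d⟩ / HS(x₁∨⋯∨x_d)²`, then `λ x₁∨⋯∨x_d` is a best symmetric-decomposable-rank-1
approximation of `z` in the Hilbert–Schmidt norm; in particular such a best approximation
always exists. -/
theorem best_symmetric_decomposable_rank_one_approximation
    {𝕜 : Type*} [RCLike 𝕜] {d n : ℕ} (hn : 0 < n)
    (z : EuclideanSpace 𝕜 (Fin d → Fin n))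
    (x : Fin d → EuclideanSpace 𝕜 (Fin n)) (hx : ∀ i, ‖x i‖ = 1)
    (hmax : ∀ u : Fin d → EuclideanSpace 𝕜 (Fin n), (∀ i, ‖u i‖ = 1) →
      ‖(inner 𝕜 (vee u) z : 𝕜)‖ / ‖vee u‖ ≤ ‖(inner 𝕜 (vee x) z : 𝕜)‖ / ‖vee x‖) :
    (∀ (μ : 𝕜) (u : Fin d → EuclideanSpace 𝕜 (Fin n)), (∀ i, ‖u i‖ = 1) →
        ‖z - ((inner 𝕜 (vee x) z : 𝕜) / ((‖vee x‖ : 𝕜) ^ 2)) • vee x‖ ≤ ‖z - μ • vee u‖) ∧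
    (∃ (v : Fin d → EuclideanSpace 𝕜 (Fin n)) (c : 𝕜), (∀ i, ‖v i‖ = 1) ∧
        ∀ (μ : 𝕜) (u : Fin d → EuclideanSpace 𝕜 (Fin n)), (∀ i, ‖u i‖ = 1) →
          ‖z - c • vee v‖ ≤ ‖z - μ • vee u‖) :=
  best_symmetric_decomposable_rank_one_approximation_general z x hx hmax
end

section
/- Let z ∈ ℂ² ⊗ ℂ² be the symmetric tensor z = e₁ ⊗ e₁ + e₂ ⊗ e₂, where e₁, e₂ is the canonical basis. Then the non-symmetric elementary tensor x = (1/√2, i/√2) ⊗ (1/√2, −i/√2) satisfies ⟨z, x⟩ = |⟨z, x⟩| = ε(z), where ε(z) = sup{|⟨y₁ ⊗ y₂, z⟩| : ‖y₁‖ = ‖y₂‖ = 1} is the injective norm; hence x is a best rank-1 approximation of z in the Hilbert–Schmidt norm and is not symmetric. -/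
open scoped BigOperators

/-!
For `y` in `ℂⁿ × ℂⁿ`, `⟪y₀ ⊗ y₁, ∑ₖ eₖ ⊗ eₖ⟫` is the conjugate of the *bilinear* pairing
`∑ₖ y₀ₖ y₁ₖ`, so Cauchy–Schwarz gives `ε(z) ≤ 1`, with equality at `e₁ ⊗ e₁` but also at the
non-symmetric `x`: the vectors `(1, i)/√2` and `(1, -i)/√2` pair bilinearly to `1`.

For an arbitrary tensor `z`, scaling the factors of `u` to unit vectors gives
`|⟪u, z⟫| ≤ ε(z) ‖u‖` for elementary `u`, hence
`‖z - u‖² ≥ ‖z‖² - 2 ε(z) ‖u‖ + ‖u‖² ≥ ‖z‖² - ε(z)²`; both bounds are attained at `ε(z) • x`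
whenever `x` is a unit elementary tensor with `⟪x, z⟫ = ε(z)`.
-/

open scoped InnerProductSpace ComplexConjugate

section ElementaryTensor

variable {𝕜 : Type*} [RCLike 𝕜] {d n : ℕ}

theorem inner_eTensor_eTensor (x y : Fin d → EuclideanSpace 𝕜 (Fin n)) :
    ⟪eTensor x, eTensor y⟫_𝕜 = ∏ i, ⟪x i, y i⟫_𝕜 := by
  simp only [PiLp.inner_apply, eTensor, RCLike.inner_apply, map_prod, Fintype.prod_sum,
    Finset.prod_mul_distrib]

theorem norm_eTensor (x : Fin d → EuclideanSpace 𝕜 (Fin n)) :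
    ‖eTensor x‖ = ∏ i, ‖x i‖ := by
  have h := inner_eTensor_eTensor x x
  simp only [inner_self_eq_norm_sq_to_K, ← RCLike.ofReal_prod, ← RCLike.ofReal_pow,
    Finset.prod_pow] at h
  rw [← sq_eq_sq₀ (norm_nonneg _) (Finset.prod_nonneg fun i _ => norm_nonneg _)]
  exact_mod_cast h

theorem eTensor_smul (c : Fin d → 𝕜) (x : Fin d → EuclideanSpace 𝕜 (Fin n)) :
    eTensor (fun i => c i • x i) = (∏ i, c i) • eTensor x := by
  ext j
  simp [eTensor, Finset.prod_mul_distrib]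

end ElementaryTensor

section InjectiveNorm

variable {𝕜 : Type*} [RCLike 𝕜] {d n : ℕ}

theorem bddAbove_norm_inner_eTensor (z : EuclideanSpace 𝕜 (Fin d → Fin n)) :
    BddAbove {c : ℝ | ∃ y : Fin d → EuclideanSpace 𝕜 (Fin n),
      (∀ i, ‖y i‖ = 1) ∧ c = ‖⟪eTensor y, z⟫_𝕜‖} := by
  refine ⟨‖z‖, ?_⟩
  rintro c ⟨y, hy, rfl⟩
  simpa [norm_eTensor, hy] using norm_inner_le_norm (𝕜 := 𝕜) (eTensor y) z

theorem norm_inner_eTensor_le_injNorm (z : EuclideanSpace 𝕜 (Fin d → Fin n))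
    {y : Fin d → EuclideanSpace 𝕜 (Fin n)} (hy : ∀ i, ‖y i‖ = 1) :
    ‖⟪eTensor y, z⟫_𝕜‖ ≤ injNorm z :=
  le_csSup (bddAbove_norm_inner_eTensor z) ⟨y, hy, rfl⟩

theorem norm_inner_eTensor_le_injNorm_mul (z : EuclideanSpace 𝕜 (Fin d → Fin n))
    (u : Fin d → EuclideanSpace 𝕜 (Fin n)) :
    ‖⟪eTensor u, z⟫_𝕜‖ ≤ injNorm z * ∏ i, ‖u i‖ := by
  by_cases hu : ∀ i, u i ≠ 0
  · set y : Fin d → EuclideanSpace 𝕜 (Fin n) := fun i => (‖u i‖⁻¹ : 𝕜) • u i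
    have hy : ∀ i, ‖y i‖ = 1 := fun i => norm_smul_inv_norm (hu i)
    have hyu : eTensor u = (∏ i, (‖u i‖ : 𝕜)) • eTensor y := by
      rw [← eTensor_smul]
      congr 1; funext i
      have : (‖u i‖ : 𝕜) ≠ 0 := by exact_mod_cast norm_ne_zero_iff.mpr (hu i)
      simp only [y, smul_smul, mul_inv_cancel₀ this, one_smul]
    rw [hyu, inner_smul_left, norm_mul, RCLike.norm_conj, ← RCLike.ofReal_prod,
      RCLike.norm_of_nonneg (Finset.prod_nonneg fun i _ => norm_nonneg _), mul_comm]
    exact mul_le_mul_of_nonneg_right (norm_inner_eTensor_le_injNorm z hy)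
      (Finset.prod_nonneg fun i _ => norm_nonneg _)
  · push Not at hu
    obtain ⟨i, hi⟩ := hu
    have h0 : ∏ i, ‖u i‖ = 0 := Finset.prod_eq_zero (Finset.mem_univ i) (by simp [hi])
    have hu0 : eTensor u = 0 := by rw [← norm_eq_zero, norm_eTensor, h0]
    simp [h0, hu0]

theorem norm_sub_injNorm_smul_eTensor_le {z : EuclideanSpace 𝕜 (Fin d → Fin n)}
    {y : Fin d → EuclideanSpace 𝕜 (Fin n)} (hy : ∀ i, ‖y i‖ = 1)
    (hyz : ⟪eTensor y, z⟫_𝕜 = injNorm z) (u : Fin d → EuclideanSpace 𝕜 (Fin n)) :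
    ‖z - (injNorm z : 𝕜) • eTensor y‖ ≤ ‖z - eTensor u‖ := by
  set ε := injNorm z
  set t := ∏ i, ‖u i‖
  have hy_norm : ‖eTensor y‖ = 1 := by simp [norm_eTensor, hy]
  have hx_sq : ‖z - (ε : 𝕜) • eTensor y‖ ^ 2 = ‖z‖ ^ 2 - ε ^ 2 := by
    rw [norm_sub_sq (𝕜 := 𝕜), inner_smul_right, RCLike.re_ofReal_mul, ← inner_re_symm, hyz,
      RCLike.ofReal_re, norm_smul, RCLike.norm_ofReal, hy_norm,
      abs_of_nonneg ((norm_nonneg _).trans (norm_inner_eTensor_le_injNorm z hy))]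
    ring
  have hre : RCLike.re ⟪z, eTensor u⟫_𝕜 ≤ ε * t :=
    (RCLike.re_le_norm _).trans
      (by rw [← norm_inner_symm]; exact norm_inner_eTensor_le_injNorm_mul z u)
  have hu_sq : ‖z‖ ^ 2 - 2 * (ε * t) + t ^ 2 ≤ ‖z - eTensor u‖ ^ 2 := by
    rw [norm_sub_sq (𝕜 := 𝕜), norm_eTensor]
    linarith
  have : ‖z - (ε : 𝕜) • eTensor y‖ ^ 2 ≤ ‖z - eTensor u‖ ^ 2 := by
    nlinarith [sq_nonneg (ε - t)]
  exact (pow_le_pow_iff_left₀ (norm_nonneg _) (norm_nonneg _) two_ne_zero).mp this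

end InjectiveNorm

theorem norm_sum_mul_le_norm_mul_norm {𝕜 ι : Type*} [RCLike 𝕜] [Fintype ι]
    (a b : EuclideanSpace 𝕜 ι) :
    ‖∑ i, a i * b i‖ ≤ ‖a‖ * ‖b‖ := by
  calc ‖∑ i, a i * b i‖ ≤ ∑ i, ‖a i‖ * ‖b i‖ := by
        simpa only [norm_mul] using norm_sum_le Finset.univ fun i => a i * b i
    _ ≤ √(∑ i, ‖a i‖ ^ 2) * √(∑ i, ‖b i‖ ^ 2) := Real.sum_mul_le_sqrt_mul_sqrt _ _ _
    _ = ‖a‖ * ‖b‖ := by rw [EuclideanSpace.norm_eq, EuclideanSpace.norm_eq]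

section IdentityTensor

variable {𝕜 : Type*} [RCLike 𝕜] {n : ℕ}

theorem inner_eTensor_sum_single (y : Fin 2 → EuclideanSpace 𝕜 (Fin n)) :
    ⟪eTensor y, ∑ k, eTensor ![EuclideanSpace.single k 1, EuclideanSpace.single k 1]⟫_𝕜 =
      conj (∑ k, y 0 k * y 1 k) := by
  simp [inner_sum, inner_eTensor_eTensor, Fin.prod_univ_two, EuclideanSpace.inner_single_right]

theorem injNorm_sum_single (hn : 0 < n) :
    injNorm (∑ k : Fin n,
      eTensor ![EuclideanSpace.single k (1 : 𝕜), EuclideanSpace.single k 1]) = 1 := by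
  set e₀ : EuclideanSpace 𝕜 (Fin n) := EuclideanSpace.single ⟨0, hn⟩ 1
  refine IsGreatest.csSup_eq ⟨⟨![e₀, e₀], ?_, ?_⟩, ?_⟩
  · exact Fin.forall_fin_two.mpr ⟨by simp [e₀], by simp [e₀]⟩
  · simp [inner_eTensor_sum_single, e₀]
  · rintro c ⟨y, hy, rfl⟩
    rw [inner_eTensor_sum_single, RCLike.norm_conj]
    simpa [hy 0, hy 1] using norm_sum_mul_le_norm_mul_norm (y 0) (y 1)

end IdentityTensor

theorem IsSymTensor.eTensor_pair_mul_comm {𝕜 : Type*} [RCLike 𝕜] {n : ℕ}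
    {a b : EuclideanSpace 𝕜 (Fin n)} (h : IsSymTensor (eTensor ![a, b])) (i j : Fin n) :
    a i * b j = a j * b i := by
  have : eTensor ![a, b] (![i, j] ∘ Equiv.swap 0 1) = eTensor ![a, b] ![i, j] :=
    congrFun (congrArg WithLp.ofLp (h (Equiv.swap 0 1))) ![i, j]
  simpa [eTensor, Fin.prod_univ_two, mul_comm] using this.symm

theorem norm_toLp_inv_sqrt_two {c : ℂ} (hc : ‖c‖ = 1) :
    ‖(WithLp.toLp 2 ![(1 / Real.sqrt 2 : ℂ), c / Real.sqrt 2] : EuclideanSpace ℂ (Fin 2))‖ = 1 := by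
  simp [EuclideanSpace.norm_eq, Fin.sum_univ_two, hc]
  norm_num

/-- For the symmetric tensor `z = e₁⊗e₁ + e₂⊗e₂ ∈ ℂ²⊗ℂ²`, the non-symmetric
elementary tensor `x = (1/√2, i/√2) ⊗ (1/√2, −i/√2)` satisfies
`⟨z,x⟩ = |⟨z,x⟩| = ε(z)`; hence `x` is a best rank-1 approximation of `z` in the
Hilbert–Schmidt norm and is not symmetric. -/
theorem nonsymmetric_best_rank_one_example :
    letI e : Fin 2 → EuclideanSpace ℂ (Fin 2) := fun i => EuclideanSpace.single i 1
    letI z : EuclideanSpace ℂ (Fin 2 → Fin 2) := eTensor ![e 0, e 0] + eTensor ![e 1, e 1]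
    letI v : EuclideanSpace ℂ (Fin 2) :=
      WithLp.toLp 2 ![(1 / Real.sqrt 2 : ℂ), Complex.I / Real.sqrt 2]
    letI w : EuclideanSpace ℂ (Fin 2) :=
      WithLp.toLp 2 ![(1 / Real.sqrt 2 : ℂ), -Complex.I / Real.sqrt 2]
    letI x : EuclideanSpace ℂ (Fin 2 → Fin 2) := eTensor ![v, w]
    (inner ℂ x z : ℂ) = (‖(inner ℂ x z : ℂ)‖ : ℂ) ∧
    ‖(inner ℂ x z : ℂ)‖ = injNorm z ∧
    (∀ u : Fin 2 → EuclideanSpace ℂ (Fin 2), ‖z - x‖ ≤ ‖z - eTensor u‖) ∧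
    ¬ IsSymTensor x := by
  rw [← Fin.sum_univ_two fun k =>
    eTensor ![EuclideanSpace.single k (1 : ℂ), EuclideanSpace.single k 1]]
  set z := ∑ k : Fin 2, eTensor ![EuclideanSpace.single k (1 : ℂ), EuclideanSpace.single k 1]
  set v : EuclideanSpace ℂ (Fin 2) :=
    WithLp.toLp 2 ![(1 / Real.sqrt 2 : ℂ), Complex.I / Real.sqrt 2]
  set w : EuclideanSpace ℂ (Fin 2) :=
    WithLp.toLp 2 ![(1 / Real.sqrt 2 : ℂ), -Complex.I / Real.sqrt 2]
  have hε : injNorm z = 1 := injNorm_sum_single two_pos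
  have hvw : ∀ i, ‖![v, w] i‖ = 1 :=
    Fin.forall_fin_two.mpr ⟨norm_toLp_inv_sqrt_two (by simp), norm_toLp_inv_sqrt_two (by simp)⟩
  have hxz : ⟪eTensor ![v, w], z⟫_ℂ = 1 := by
    have h2 : ((Real.sqrt 2 : ℂ)) ^ 2 = 2 := by exact_mod_cast Real.sq_sqrt zero_le_two
    rw [inner_eTensor_sum_single]
    simp [v, w, Fin.sum_univ_two, div_mul_div_comm, ← sq, h2, map_ofNat]
    norm_num
  refine ⟨by simp [hxz], by simp [hxz, hε], fun u => ?_, fun hx => ?_⟩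
  · have h := norm_sub_injNorm_smul_eTensor_le hvw (by rw [hxz, hε, RCLike.ofReal_one]) u
    rwa [hε, RCLike.ofReal_one, one_smul] at h
  · have h := hx.eTensor_pair_mul_comm 0 1
    change 1 / (√2 : ℂ) * (-Complex.I / √2) = Complex.I / √2 * (1 / √2) at h
    have h2 : (√2 : ℂ) ≠ 0 := by exact_mod_cast Real.sqrt_ne_zero'.mpr two_pos
    field_simp at h
    norm_num at h
end

section
/- Let z ∈ ⊗^d 𝕂ⁿ be a symmetric tensor with a representation z = Σ_{i=1}^r z₁ⁱ ⊗ ⋯ ⊗ z_dⁱ. Then π(z) = Σ_{i=1}^r ‖z₁ⁱ‖⋯‖z_dⁱ‖ holds if and only if there exists a symmetric d-linear form L on 𝕂ⁿ of norm one such that L(z₁ⁱ, ..., z_dⁱ) = ‖z₁ⁱ‖⋯‖z_dⁱ‖ for every i = 1, ..., r. -/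
open scoped BigOperators

/-!
If the representation `z = ∑ᵢ eTensor (v i)` is optimal, Hahn–Banach for the projective seminorm
gives a functional `g` with `g z = π(z)` and `‖g t‖ ≤ π(t)`. The form `L₀ = g ∘ eTensor` is bounded
by `∏ ‖yᵢ‖`, and since `z` is symmetric, `∑ᵢ L₀ (v i ∘ η) = g z = ∑ᵢ ∏ⱼ ‖v i j‖` for every
permutation `η`; as each term is bounded by its summand on the right, every term equals it.
Averaging `L₀` over permutations then gives the symmetric form. When `d = 0` (where `π` is not a
seminorm) or every `v i` has a zero factor, the diagonal coordinate form `y ↦ ∏ᵢ (y i) p` does the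
job instead.

Conversely, a bounded form factors linearly through the tensor space, so for any other
representation `z = ∑ᵢ eTensor (w i)` we get
`∑ᵢ ∏ⱼ ‖v i j‖ = ∑ᵢ L (v i) = ∑ᵢ L (w i) ≤ ∑ᵢ ∏ⱼ ‖w i j‖`.
-/

theorem Seminorm.exists_dual_apply_eq {𝕜 E : Type*} [RCLike 𝕜] [AddCommGroup E] [Module 𝕜 E]
    (p : Seminorm 𝕜 E) (x : E) :
    ∃ g : Module.Dual 𝕜 E, g x = p x ∧ ∀ y, ‖g y‖ ≤ p y := by
  rcases eq_or_ne x 0 with rfl | hx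
  · exact ⟨0, by simp, fun y => by simp⟩
  set c := LinearEquiv.coord 𝕜 E x hx
  let f : Module.Dual 𝕜 (𝕜 ∙ x) := (p x : 𝕜) • c.toLinearMap
  have hf : ∀ y, f y = p x * c y := fun y => rfl
  obtain ⟨g, hgf, hgp⟩ := f.exists_extension_of_le_seminorm (𝕜 ∙ x) (p := p) fun y => by
    rw [hf, ← LinearEquiv.coord_apply_smul 𝕜 E x hx y, map_smul_eq_mul, norm_mul,
      RCLike.norm_ofReal, abs_of_nonneg (apply_nonneg p x), mul_comm]
  refine ⟨g, ?_, hgp⟩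
  rw [hgf ⟨x, Submodule.mem_span_singleton_self x⟩, hf, LinearEquiv.coord_self, mul_one]

theorem RCLike.eq_ofReal_of_norm_le_of_sum_eq {𝕜 ι : Type*} [RCLike 𝕜] [Fintype ι]
    {t : ι → 𝕜} {a : ι → ℝ} (hle : ∀ i, ‖t i‖ ≤ a i) (hsum : ∑ i, t i = ∑ i, (a i : 𝕜))
    (i : ι) : t i = a i := by
  have hre : ∀ i ∈ Finset.univ, RCLike.re (t i) = a i := by
    refine (Finset.sum_eq_sum_iff_of_le fun i _ => (RCLike.re_le_norm _).trans (hle i)).1 ?_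
    simpa using congrArg RCLike.re hsum
  rw [← RCLike.re_eq_self_of_le ((hle i).trans_eq (hre i (Finset.mem_univ i)).symm),
    hre i (Finset.mem_univ i)]

theorem prod_norm_update_smul_self {𝕜 ι E : Type*} [RCLike 𝕜] [Fintype ι] [DecidableEq ι]
    [SeminormedAddCommGroup E] [NormedSpace 𝕜 E] (x : ι → E) (p : ι) (c : 𝕜) :
    ∏ i, ‖Function.update x p (c • x p) i‖ = ‖c‖ * ∏ i, ‖x i‖ := by
  rw [← Finset.mul_prod_erase _ _ (Finset.mem_univ p),
    ← Finset.mul_prod_erase _ _ (Finset.mem_univ p), Function.update_self, norm_smul, mul_assoc]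
  congr 2
  exact Finset.prod_congr rfl fun i hi => by rw [Function.update_of_ne (Finset.ne_of_mem_erase hi)]

namespace MultilinearMap

section Symmetrization

variable {𝕜 ι M N : Type*} [Field 𝕜] [CharZero 𝕜] [Fintype ι] [DecidableEq ι]
  [AddCommGroup M] [Module 𝕜 M] [AddCommGroup N] [Module 𝕜 N]

noncomputable def symmetrization (L : MultilinearMap 𝕜 (fun _ : ι => M) N) :
    MultilinearMap 𝕜 (fun _ : ι => M) N :=
  (Fintype.card (Equiv.Perm ι) : 𝕜)⁻¹ • ∑ σ : Equiv.Perm ι, L.domDomCongr σ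

theorem symmetrization_apply (L : MultilinearMap 𝕜 (fun _ : ι => M) N) (y : ι → M) :
    L.symmetrization y =
      (Fintype.card (Equiv.Perm ι) : 𝕜)⁻¹ • ∑ σ : Equiv.Perm ι, L (y ∘ σ) := by
  simp [symmetrization]
  rfl

theorem symmetrization_comp_perm (L : MultilinearMap 𝕜 (fun _ : ι => M) N) (τ : Equiv.Perm ι)
    (y : ι → M) : L.symmetrization (y ∘ τ) = L.symmetrization y := by
  rw [symmetrization_apply, symmetrization_apply,
    ← Equiv.sum_comp (Equiv.mulLeft τ) fun σ : Equiv.Perm ι => L (y ∘ σ)]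
  rfl

theorem symmetrization_apply_of_forall {L : MultilinearMap 𝕜 (fun _ : ι => M) N} {y : ι → M}
    {c : N} (h : ∀ σ : Equiv.Perm ι, L (y ∘ σ) = c) : L.symmetrization y = c := by
  rw [symmetrization_apply, Finset.sum_congr rfl fun σ _ => h σ, Finset.sum_const,
    Finset.card_univ, ← Nat.cast_smul_eq_nsmul 𝕜, smul_smul,
    inv_mul_cancel₀ (Nat.cast_ne_zero.2 Fintype.card_ne_zero), one_smul]

end Symmetrization

section NormedForms

variable {𝕜 ι M : Type*} [RCLike 𝕜] [Fintype ι] [SeminormedAddCommGroup M] [NormedSpace 𝕜 M]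
  {L : MultilinearMap 𝕜 (fun _ : ι => M) 𝕜}

theorem norm_symmetrization_apply_le [DecidableEq ι] (hL : ∀ y, ‖L y‖ ≤ ∏ i, ‖y i‖)
    (y : ι → M) : ‖L.symmetrization y‖ ≤ ∏ i, ‖y i‖ := by
  have hcard : (0 : ℝ) < Fintype.card (Equiv.Perm ι) := Nat.cast_pos.2 Fintype.card_pos
  rw [symmetrization_apply, norm_smul, norm_inv, RCLike.norm_natCast, inv_mul_le_iff₀ hcard]
  calc ‖∑ σ : Equiv.Perm ι, L (y ∘ σ)‖ ≤ ∑ σ : Equiv.Perm ι, ‖L (y ∘ σ)‖ := norm_sum_le _ _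
    _ ≤ ∑ _σ : Equiv.Perm ι, ∏ i, ‖y i‖ := Finset.sum_le_sum fun σ _ =>
        (hL _).trans_eq (Equiv.prod_comp σ fun i => ‖y i‖)
    _ = Fintype.card (Equiv.Perm ι) * ∏ i, ‖y i‖ := by simp

theorem sSup_norm_apply_unit_eq_one (hL : ∀ y, ‖L y‖ ≤ ∏ i, ‖y i‖) {y : ι → M}
    (hy : ∀ i, ‖y i‖ = 1) (hLy : ‖L y‖ = 1) :
    sSup {c : ℝ | ∃ y : ι → M, (∀ i, ‖y i‖ = 1) ∧ c = ‖L y‖} = 1 := by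
  refine IsGreatest.csSup_eq ⟨⟨y, hy, hLy.symm⟩, ?_⟩
  rintro _ ⟨y', hy', rfl⟩
  simpa [hy'] using hL y'

theorem exists_unit_norm_apply_eq_one {w : ι → M} (hw : L w = ((∏ i, ‖w i‖ : ℝ) : 𝕜))
    (hne : ∏ i, ‖w i‖ ≠ 0) : ∃ y : ι → M, (∀ i, ‖y i‖ = 1) ∧ ‖L y‖ = 1 := by
  have hwi : ∀ i, ‖w i‖ ≠ 0 := fun i h => hne (Finset.prod_eq_zero (Finset.mem_univ i) h)
  refine ⟨fun i => ((‖w i‖⁻¹ : ℝ) : 𝕜) • w i, fun i => ?_, ?_⟩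
  · rw [norm_smul, RCLike.norm_ofReal, abs_inv, abs_norm, inv_mul_cancel₀ (hwi i)]
  · rw [L.map_smul_univ, hw, smul_eq_mul, ← RCLike.ofReal_prod, ← RCLike.ofReal_mul,
      Finset.prod_inv_distrib, inv_mul_cancel₀ hne, RCLike.ofReal_one, norm_one]

end NormedForms

end MultilinearMap

section ElementaryTensors

variable {𝕜 : Type*} [RCLike 𝕜] {d n : ℕ}

noncomputable def eTensorMultilinear :
    MultilinearMap 𝕜 (fun _ : Fin d => EuclideanSpace 𝕜 (Fin n))
      (EuclideanSpace 𝕜 (Fin d → Fin n)) :=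
  (WithLp.linearEquiv 2 𝕜 ((Fin d → Fin n) → 𝕜)).symm.toLinearMap.compMultilinearMap <|
    MultilinearMap.pi fun j : Fin d → Fin n =>
      (MultilinearMap.mkPiAlgebra 𝕜 (Fin d) 𝕜).compLinearMap fun i =>
        PiLp.projₗ (𝕜 := 𝕜) 2 (fun _ : Fin n => 𝕜) (j i)

@[simp]
theorem eTensorMultilinear_apply (x : Fin d → EuclideanSpace 𝕜 (Fin n)) :
    eTensorMultilinear x = eTensor x := rfl

theorem eTensor_apply (x : Fin d → EuclideanSpace 𝕜 (Fin n)) (j : Fin d → Fin n) :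
    eTensor x j = ∏ i, x i (j i) := rfl

theorem eTensor_comp_perm (x : Fin d → EuclideanSpace 𝕜 (Fin n)) (η : Equiv.Perm (Fin d)) :
    eTensor (x ∘ η) = permLin 𝕜 d n η⁻¹ (eTensor x) := by
  ext j
  show ∏ i, x (η i) (j i) = ∏ i, x i (j (η⁻¹ i))
  rw [← Equiv.prod_comp η fun i => x i (j (η⁻¹ i))]
  simp

theorem smul_eTensor (x : Fin d → EuclideanSpace 𝕜 (Fin n)) (p : Fin d) (c : 𝕜) :
    c • eTensor x = eTensor (Function.update x p (c • x p)) := by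
  classical
  rw [← eTensorMultilinear_apply, ← eTensorMultilinear_apply,
    MultilinearMap.map_update_smul, Function.update_eq_self]

theorem eTensor_single (j : Fin d → Fin n) :
    eTensor (fun i => EuclideanSpace.single (j i) (1 : 𝕜)) = EuclideanSpace.single j 1 := by
  classical
  ext k
  simp only [eTensor_apply, PiLp.single_apply]
  by_cases h : k = j
  · simp [h]
  · obtain ⟨i, hi⟩ := Function.ne_iff.mp h
    rw [if_neg h]
    exact Finset.prod_eq_zero (Finset.mem_univ i) (if_neg hi)

theorem IsSymTensor.sum_eTensor_comp_perm {z : EuclideanSpace 𝕜 (Fin d → Fin n)}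
    (hz : IsSymTensor z) {r : ℕ} {v : Fin r → Fin d → EuclideanSpace 𝕜 (Fin n)}
    (hrep : z = ∑ i, eTensor (v i)) (η : Equiv.Perm (Fin d)) :
    ∑ i, eTensor (v i ∘ η) = z := by
  simp_rw [eTensor_comp_perm, ← map_sum, ← hrep]
  exact hz η⁻¹

noncomputable def MultilinearMap.tensorLift {N : Type*} [AddCommGroup N] [Module 𝕜 N]
    (L : MultilinearMap 𝕜 (fun _ : Fin d => EuclideanSpace 𝕜 (Fin n)) N) :
    EuclideanSpace 𝕜 (Fin d → Fin n) →ₗ[𝕜] N where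
  toFun t := ∑ j, t j • L fun i => EuclideanSpace.single (j i) 1
  map_add' s t := by simp [add_smul, Finset.sum_add_distrib]
  map_smul' c t := by simp [Finset.smul_sum, smul_smul]

theorem MultilinearMap.tensorLift_eTensor {N : Type*} [AddCommGroup N] [Module 𝕜 N]
    (L : MultilinearMap 𝕜 (fun _ : Fin d => EuclideanSpace 𝕜 (Fin n)) N)
    (x : Fin d → EuclideanSpace 𝕜 (Fin n)) : L.tensorLift (eTensor x) = L x := by
  classical
  have hx : x = fun i => ∑ k, x i k • EuclideanSpace.single k (1 : 𝕜) := by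
    funext i
    simpa using ((EuclideanSpace.basisFun (Fin n) 𝕜).sum_repr (x i)).symm
  conv_rhs => rw [hx, L.map_sum]
  simp_rw [L.map_smul_univ]
  rfl

noncomputable def diagCoordForm (p : Fin n) :
    MultilinearMap 𝕜 (fun _ : Fin d => EuclideanSpace 𝕜 (Fin n)) 𝕜 :=
  (MultilinearMap.mkPiAlgebra 𝕜 (Fin d) 𝕜).compLinearMap fun _ => PiLp.projₗ 2 _ p

theorem diagCoordForm_apply (p : Fin n) (y : Fin d → EuclideanSpace 𝕜 (Fin n)) :
    diagCoordForm p y = ∏ i, y i p := by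
  simp [diagCoordForm]

end ElementaryTensors

section ProjectiveNorm

variable {𝕜 : Type*} [RCLike 𝕜] {d n : ℕ}

theorem projNorm_le {ι : Type*} [Fintype ι] {z : EuclideanSpace 𝕜 (Fin d → Fin n)}
    (w : ι → Fin d → EuclideanSpace 𝕜 (Fin n)) (hw : z = ∑ i, eTensor (w i)) :
    projNorm z ≤ ∑ i, ∏ j, ‖w i j‖ := by
  let e := Fintype.equivFin ι
  refine csInf_le ⟨0, ?_⟩ ⟨Fintype.card ι, w ∘ e.symm, ?_, ?_⟩
  · rintro _ ⟨r, v, -, rfl⟩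
    positivity
  · rw [hw, ← e.symm.sum_comp]; rfl
  · rw [← e.symm.sum_comp]; rfl

theorem le_projNorm {z : EuclideanSpace 𝕜 (Fin d → Fin n)} {c : ℝ}
    (hz : ∃ (r : ℕ) (v : Fin r → Fin d → EuclideanSpace 𝕜 (Fin n)), z = ∑ i, eTensor (v i))
    (h : ∀ (r : ℕ) (v : Fin r → Fin d → EuclideanSpace 𝕜 (Fin n)),
      z = ∑ i, eTensor (v i) → c ≤ ∑ i, ∏ j, ‖v i j‖) :
    c ≤ projNorm z := by
  obtain ⟨r, v, hv⟩ := hz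
  refine le_csInf ⟨_, r, v, hv, rfl⟩ ?_
  rintro _ ⟨r', v', hv', rfl⟩
  exact h r' v' hv'

theorem projNorm_nonneg (z : EuclideanSpace 𝕜 (Fin d → Fin n)) : 0 ≤ projNorm z :=
  Real.sInf_nonneg <| by
    rintro _ ⟨r, v, -, rfl⟩
    positivity

theorem projNorm_zero : projNorm (0 : EuclideanSpace 𝕜 (Fin d → Fin n)) = 0 :=
  le_antisymm (by simpa using projNorm_le (ι := Empty) (fun i => i.elim) (by simp))
    (projNorm_nonneg 0)

theorem projNorm_eTensor_le (x : Fin d → EuclideanSpace 𝕜 (Fin n)) :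
    projNorm (eTensor x) ≤ ∏ i, ‖x i‖ := by
  simpa using projNorm_le (ι := Unit) (fun _ => x) (by simp)

variable [NeZero d]

theorem exists_sum_eTensor_eq (z : EuclideanSpace 𝕜 (Fin d → Fin n)) :
    ∃ (r : ℕ) (v : Fin r → Fin d → EuclideanSpace 𝕜 (Fin n)), z = ∑ i, eTensor (v i) := by
  classical
  let w : (Fin d → Fin n) → Fin d → EuclideanSpace 𝕜 (Fin n) := fun j =>
    Function.update (fun i => EuclideanSpace.single (j i) 1) 0 (z j • EuclideanSpace.single (j 0) 1)
  have hw : z = ∑ j, eTensor (w j) := by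
    simp_rw [w, ← smul_eTensor, eTensor_single]
    conv_lhs => rw [← (EuclideanSpace.basisFun _ 𝕜).sum_repr z]
    simp
  let e := Fintype.equivFin (Fin d → Fin n)
  exact ⟨_, w ∘ e.symm, by rw [hw, ← e.symm.sum_comp]; rfl⟩

theorem projNorm_add_le (a b : EuclideanSpace 𝕜 (Fin d → Fin n)) :
    projNorm (a + b) ≤ projNorm a + projNorm b := by
  rw [← sub_le_iff_le_add']
  refine le_projNorm (exists_sum_eTensor_eq b) fun rb wb hb => ?_
  rw [sub_le_comm]
  refine le_projNorm (exists_sum_eTensor_eq a) fun ra wa ha => ?_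
  rw [sub_le_iff_le_add]
  simpa [Fintype.sum_sum_type] using
    projNorm_le (Sum.elim wa wb) (by simp [Fintype.sum_sum_type, ha, hb])

theorem projNorm_smul_le (c : 𝕜) (z : EuclideanSpace 𝕜 (Fin d → Fin n)) :
    projNorm (c • z) ≤ ‖c‖ * projNorm z := by
  classical
  rcases eq_or_ne c 0 with rfl | hc
  · simp [projNorm_zero]
  have hc' : 0 < ‖c‖ := norm_pos_iff.2 hc
  rw [← div_le_iff₀' hc']
  refine le_projNorm (exists_sum_eTensor_eq z) fun r w hw => ?_
  rw [div_le_iff₀' hc', Finset.mul_sum]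
  simp_rw [← prod_norm_update_smul_self (w _) 0 c]
  exact projNorm_le _ (by simp_rw [hw, Finset.smul_sum, smul_eTensor _ 0])

noncomputable def projSeminorm : Seminorm 𝕜 (EuclideanSpace 𝕜 (Fin d → Fin n)) :=
  Seminorm.ofSMulLE projNorm projNorm_zero projNorm_add_le projNorm_smul_le

end ProjectiveNorm

section Norming

variable {𝕜 : Type*} [RCLike 𝕜] {d n : ℕ}

def IsSymmetricNormingForm
    (L : MultilinearMap 𝕜 (fun _ : Fin d => EuclideanSpace 𝕜 (Fin n)) 𝕜) {r : ℕ}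
    (v : Fin r → Fin d → EuclideanSpace 𝕜 (Fin n)) : Prop :=
  (∀ (η : Equiv.Perm (Fin d)) (y : Fin d → EuclideanSpace 𝕜 (Fin n)), L (y ∘ η) = L y) ∧
    (∀ y : Fin d → EuclideanSpace 𝕜 (Fin n), ‖L y‖ ≤ ∏ i, ‖y i‖) ∧
    sSup {c : ℝ | ∃ y : Fin d → EuclideanSpace 𝕜 (Fin n), (∀ i, ‖y i‖ = 1) ∧ c = ‖L y‖} = 1 ∧
    ∀ i, L (v i) = ((∏ j, ‖v i j‖ : ℝ) : 𝕜)

theorem IsSymmetricNormingForm.projNorm_eq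
    {L : MultilinearMap 𝕜 (fun _ : Fin d => EuclideanSpace 𝕜 (Fin n)) 𝕜} {r : ℕ}
    {v : Fin r → Fin d → EuclideanSpace 𝕜 (Fin n)} (hL : IsSymmetricNormingForm L v)
    {z : EuclideanSpace 𝕜 (Fin d → Fin n)} (hrep : z = ∑ i, eTensor (v i)) :
    projNorm z = ∑ i, ∏ j, ‖v i j‖ := by
  obtain ⟨-, hbound, -, hval⟩ := hL
  refine le_antisymm (projNorm_le v hrep) (le_projNorm ⟨r, v, hrep⟩ fun r' w hw => ?_)
  have hlift : ∀ {s : ℕ} (u : Fin s → Fin d → EuclideanSpace 𝕜 (Fin n)),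
      z = ∑ i, eTensor (u i) → L.tensorLift z = ∑ i, L (u i) := fun u hu => by
    simp [hu, L.tensorLift_eTensor]
  calc ∑ i, ∏ j, ‖v i j‖ = ‖L.tensorLift z‖ := by
        rw [hlift v hrep, Finset.sum_congr rfl fun i _ => hval i, ← RCLike.ofReal_sum,
          RCLike.norm_ofReal, abs_of_nonneg (by positivity)]
    _ ≤ ∑ i, ‖L (w i)‖ := (hlift w hw).symm ▸ norm_sum_le _ _
    _ ≤ ∑ i, ∏ j, ‖w i j‖ := Finset.sum_le_sum fun i _ => hbound (w i)

theorem IsSymmetricNormingForm.of_apply_unit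
    {L : MultilinearMap 𝕜 (fun _ : Fin d => EuclideanSpace 𝕜 (Fin n)) 𝕜} {r : ℕ}
    {v : Fin r → Fin d → EuclideanSpace 𝕜 (Fin n)}
    (hsymm : ∀ (η : Equiv.Perm (Fin d)) y, L (y ∘ η) = L y) (hbound : ∀ y, ‖L y‖ ≤ ∏ i, ‖y i‖)
    (hval : ∀ i, L (v i) = ((∏ j, ‖v i j‖ : ℝ) : 𝕜))
    (hunit : ∃ y : Fin d → EuclideanSpace 𝕜 (Fin n), (∀ i, ‖y i‖ = 1) ∧ ‖L y‖ = 1) :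
    IsSymmetricNormingForm L v :=
  let ⟨_, hy, hLy⟩ := hunit
  ⟨hsymm, hbound, L.sSup_norm_apply_unit_eq_one hbound hy hLy, hval⟩

theorem exists_isSymmetricNormingForm_of_degenerate (hn : 0 < n) {r : ℕ}
    (v : Fin r → Fin d → EuclideanSpace 𝕜 (Fin n)) (hv : d = 0 ∨ ∀ i, ∏ j, ‖v i j‖ = 0) :
    ∃ L, IsSymmetricNormingForm (𝕜 := 𝕜) L v := by
  classical
  let p : Fin n := ⟨0, hn⟩
  refine ⟨diagCoordForm p, .of_apply_unit (fun η y => ?_) (fun y => ?_) (fun i => ?_)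
    ⟨fun _ => EuclideanSpace.single p 1, fun _ => by simp, by simp [diagCoordForm_apply]⟩⟩
  · simp only [diagCoordForm_apply]
    exact Equiv.prod_comp η fun i => y i p
  · rw [diagCoordForm_apply, norm_prod]
    exact Finset.prod_le_prod (fun _ _ => norm_nonneg _) fun i _ => PiLp.norm_apply_le (y i) p
  · rcases hv with rfl | hv
    · simp [diagCoordForm_apply]
    · obtain ⟨j, -, hj⟩ := Finset.prod_eq_zero_iff.1 (hv i)
      rw [hv i, diagCoordForm_apply, RCLike.ofReal_zero]
      exact Finset.prod_eq_zero (Finset.mem_univ j) (by simp [norm_eq_zero.1 hj])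

theorem exists_isSymmetricNormingForm_of_projNorm_eq [NeZero d]
    {z : EuclideanSpace 𝕜 (Fin d → Fin n)} (hz : IsSymTensor z) {r : ℕ}
    {v : Fin r → Fin d → EuclideanSpace 𝕜 (Fin n)} (hrep : z = ∑ i, eTensor (v i))
    (hattain : projNorm z = ∑ i, ∏ j, ‖v i j‖) (hv : ∃ i, ∏ j, ‖v i j‖ ≠ 0) :
    ∃ L, IsSymmetricNormingForm L v := by
  obtain ⟨g, hgz, hg⟩ := (projSeminorm (𝕜 := 𝕜) (d := d) (n := n)).exists_dual_apply_eq z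
  let L₀ := g.compMultilinearMap eTensorMultilinear
  have hbound : ∀ y, ‖L₀ y‖ ≤ ∏ i, ‖y i‖ := fun y => (hg _).trans (projNorm_eTensor_le y)
  have hval : ∀ η : Equiv.Perm (Fin d), ∀ i, L₀ (v i ∘ η) = ((∏ j, ‖v i j‖ : ℝ) : 𝕜) :=
    fun η => RCLike.eq_ofReal_of_norm_le_of_sum_eq
      (fun i => (hbound _).trans_eq (Equiv.prod_comp η fun j => ‖v i j‖)) <| by
        change ∑ i, g (eTensor (v i ∘ η)) = _
        rw [← map_sum, hz.sum_eTensor_comp_perm hrep, ← RCLike.ofReal_sum, ← hattain]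
        exact hgz
  have hsymval : ∀ i, L₀.symmetrization (v i) = ((∏ j, ‖v i j‖ : ℝ) : 𝕜) := fun i =>
    MultilinearMap.symmetrization_apply_of_forall fun η => hval η i
  obtain ⟨i₀, hi₀⟩ := hv
  exact ⟨L₀.symmetrization, .of_apply_unit L₀.symmetrization_comp_perm
    (L₀.norm_symmetrization_apply_le hbound) hsymval
    (L₀.symmetrization.exists_unit_norm_apply_eq_one (hsymval i₀) hi₀)⟩

end Norming

/-- Let `z ∈ ⊗^d 𝕂ⁿ` be symmetric with representation
`z = Σ_{i=1}^r z₁ⁱ ⊗ ⋯ ⊗ z_dⁱ`.  Then `π(z) = Σᵢ ‖z₁ⁱ‖⋯‖z_dⁱ‖` holds iff there is a symmetric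
`d`-linear form `L` on `𝕂ⁿ` of norm one with `L(z₁ⁱ,…,z_dⁱ) = ‖z₁ⁱ‖⋯‖z_dⁱ‖` for all `i`. -/
theorem projNorm_attained_iff_symmetric_form
    {𝕜 : Type*} [RCLike 𝕜] {d n : ℕ} (hn : 0 < n)
    (z : EuclideanSpace 𝕜 (Fin d → Fin n)) (hz : IsSymTensor z)
    (r : ℕ) (v : Fin r → Fin d → EuclideanSpace 𝕜 (Fin n))
    (hrep : z = ∑ i, eTensor (v i)) :
    projNorm z = ∑ i, ∏ j, ‖v i j‖ ↔
      ∃ L : MultilinearMap 𝕜 (fun _ : Fin d => EuclideanSpace 𝕜 (Fin n)) 𝕜,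
        (∀ (η : Equiv.Perm (Fin d)) (y : Fin d → EuclideanSpace 𝕜 (Fin n)),
          L (y ∘ η) = L y) ∧
        (∀ y : Fin d → EuclideanSpace 𝕜 (Fin n), ‖L y‖ ≤ ∏ i, ‖y i‖) ∧
        sSup {c : ℝ | ∃ y : Fin d → EuclideanSpace 𝕜 (Fin n),
          (∀ i, ‖y i‖ = 1) ∧ c = ‖L y‖} = 1 ∧
        (∀ i, L (v i) = ((∏ j, ‖v i j‖ : ℝ) : 𝕜)) := by
  refine ⟨fun hattain => ?_, fun ⟨L, hL⟩ => IsSymmetricNormingForm.projNorm_eq hL hrep⟩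
  by_cases hdeg : d = 0 ∨ ∀ i, ∏ j, ‖v i j‖ = 0
  · exact exists_isSymmetricNormingForm_of_degenerate hn v hdeg
  · push Not at hdeg
    have : NeZero d := ⟨hdeg.1⟩
    exact exists_isSymmetricNormingForm_of_projNorm_eq hz hrep hattain hdeg.2
end
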